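/- arXiv:1311.3179 — 5 statements merged into one kernel-verified Lean document; each statement's English description precedes it below -/
import Mathlib

section
/- Let S : {-1,1}^n → ℝ be a random variable on the uniform cube and t ≥ 1. If the moments satisfy the Khinchine-type bound (E|S|^{2t})^{1/(2t)} ≤ √((2t-1)/(t-1))·(E|S|^t)^{1/t} (valid for Rademacher sums when t > 1), then P(|S| ≥ (1/2)·(E|S|^t)^{1/t}) ≥ (1/4)·((t-1)/(2t-1))^t. -/
open Classical

/-- Paley–Zygmund style bound: if `S` on the uniform cube satisfies the
Khinchine-type moment comparison, then
`P(|S| ≥ ½‖S‖_t) ≥ ¼·((t-1)/(2t-1))^t`. -/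
theorem stmt_6 (n : ℕ) (S : (Fin n → Bool) → ℝ) (t : ℝ) (ht : 1 ≤ t)
    (hkh : ((∑ x, |S x| ^ (2 * t)) / 2 ^ n) ^ (1 / (2 * t)) ≤
        Real.sqrt ((2 * t - 1) / (t - 1)) * ((∑ x, |S x| ^ t) / 2 ^ n) ^ (1 / t)) :
    (1 / 4) * ((t - 1) / (2 * t - 1)) ^ t ≤
      ((Finset.univ.filter fun x : Fin n → Bool =>
          (1 / 2) * ((∑ y, |S y| ^ t) / 2 ^ n) ^ (1 / t) ≤ |S x|).card : ℝ) / 2 ^ n := by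
  have h2n : (0:ℝ) < 2 ^ n := by positivity
  have ht0 : (0:ℝ) < t := lt_of_lt_of_le one_pos ht
  set St : ℝ := ∑ x, |S x| ^ t with hStdef
  have hSt0 : 0 ≤ St :=
    Finset.sum_nonneg fun x _ => Real.rpow_nonneg (abs_nonneg _) _
  set N : ℝ := (St / 2 ^ n) ^ (1 / t) with hNdef
  have hN0 : 0 ≤ N := Real.rpow_nonneg (by positivity) _
  set p : (Fin n → Bool) → Prop := fun x => (1/2) * N ≤ |S x| with hpdef
  set A : Finset (Fin n → Bool) := Finset.univ.filter p with hAdef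
  -- dispose of the case t = 1
  rcases eq_or_lt_of_le ht with h1 | h1
  · rw [← h1]
    have : ((1:ℝ) - 1) / (2 * 1 - 1) = 0 := by norm_num
    rw [this, Real.zero_rpow (by norm_num : (1:ℝ) ≠ 0), mul_zero]
    positivity
  -- now t > 1
  have ht1 : (0:ℝ) < t - 1 := by linarith
  have ht2 : (0:ℝ) < 2 * t - 1 := by linarith
  set c : ℝ := (2 * t - 1) / (t - 1) with hcdef
  have hc0 : 0 < c := div_pos ht2 ht1
  have hct0 : 0 < c ^ t := Real.rpow_pos_of_pos hc0 t
  have hr : (t - 1) / (2 * t - 1) = c⁻¹ := (inv_div _ _).symm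
  -- goal reduction: suffices 1/4 ≤ c^t * (A.card / 2^n)
  have hgoal : (1/4 : ℝ) ≤ c ^ t * ((A.card : ℝ) / 2 ^ n) →
      (1 / 4) * ((t - 1) / (2 * t - 1)) ^ t ≤ ((A.card : ℝ)) / 2 ^ n := by
    intro h
    rw [hr, Real.inv_rpow hc0.le]
    rw [mul_comm] at h
    calc (1/4 : ℝ) * (c ^ t)⁻¹ ≤ ((A.card : ℝ) / 2 ^ n * c ^ t) * (c ^ t)⁻¹ := by
          apply mul_le_mul_of_nonneg_right h (by positivity)
      _ = (A.card : ℝ) / 2 ^ n := by field_simp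
  apply hgoal
  -- case St = 0 : A = univ
  rcases eq_or_lt_of_le hSt0 with h0 | h0
  · have hNz : N = 0 := by
      rw [hNdef, ← h0]
      simp [Real.zero_rpow (inv_ne_zero ht0.ne')]
    have hAuniv : A = Finset.univ := by
      rw [hAdef]
      apply Finset.filter_true_of_mem
      intro x _
      rw [hpdef]
      simp [hNz, abs_nonneg]
    rw [hAuniv]
    simp only [Finset.card_univ, Fintype.card_fun, Fintype.card_bool, Fintype.card_fin]
    have : ((2 ^ n : ℕ) : ℝ) / 2 ^ n = 1 := by
      push_cast; field_simp
    rw [this, mul_one]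
    have hc1 : 1 ≤ c := by
      rw [hcdef, le_div_iff₀ ht1]; linarith
    calc (1/4 : ℝ) ≤ 1 := by norm_num
      _ = 1 ^ t := (Real.one_rpow t).symm
      _ ≤ c ^ t := Real.rpow_le_rpow (by norm_num) hc1 ht0.le
  -- main case: St > 0
  set S2 : ℝ := ∑ x, |S x| ^ (2 * t) with hS2def
  have hS20 : 0 ≤ S2 :=
    Finset.sum_nonneg fun x _ => Real.rpow_nonneg (abs_nonneg _) _
  have hNt : N ^ t = St / 2 ^ n := by
    rw [hNdef, ← Real.rpow_mul (by positivity), one_div_mul_cancel ht0.ne',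
      Real.rpow_one]
  -- moment comparison
  have hmom : S2 ≤ c ^ t * St ^ 2 / 2 ^ n := by
    have h1' : S2 / 2 ^ n ≤ (Real.sqrt c * N) ^ (2 * t) := by
      have hq : (0:ℝ) ≤ S2 / 2 ^ n := div_nonneg hS20 h2n.le
      calc S2 / 2 ^ n = ((S2 / 2 ^ n) ^ (1/(2*t))) ^ (2*t) := by
            rw [← Real.rpow_mul hq,
              one_div_mul_cancel (by positivity : (2*t) ≠ 0), Real.rpow_one]
        _ ≤ (Real.sqrt c * N) ^ (2*t) :=
            Real.rpow_le_rpow (Real.rpow_nonneg hq _) hkh (by positivity)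
    have h2' : (Real.sqrt c * N) ^ (2*t) = c ^ t * (St / 2^n) ^ 2 := by
      rw [Real.mul_rpow (Real.sqrt_nonneg _) hN0, Real.sqrt_eq_rpow,
        ← Real.rpow_mul hc0.le, ← hNt, show (1/2) * (2*t) = t by ring,
        show (2:ℝ)*t = t*2 by ring, Real.rpow_mul hN0, Real.rpow_two]
    rw [h2'] at h1'
    rw [div_le_iff₀ h2n] at h1'
    calc S2 ≤ c ^ t * (St / 2 ^ n) ^ 2 * 2 ^ n := h1'
      _ = c ^ t * St ^ 2 / 2 ^ n := by field_simp
  -- Cauchy–Schwarz on the event A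
  have hCS : (∑ x ∈ A, |S x| ^ t) ^ 2 ≤ S2 * A.card := by
    have hcs := Finset.sum_mul_sq_le_sq_mul_sq A (fun x => |S x| ^ t) (fun _ => (1:ℝ))
    simp only [mul_one, one_pow, Finset.sum_const, nsmul_eq_mul] at hcs
    refine hcs.trans ?_
    apply mul_le_mul_of_nonneg_right _ (Nat.cast_nonneg _)
    calc ∑ x ∈ A, (|S x| ^ t) ^ 2 = ∑ x ∈ A, |S x| ^ (2*t) := by
          refine Finset.sum_congr rfl fun x _ => ?_
          rw [show (2:ℝ)*t = t*2 by ring, Real.rpow_mul (abs_nonneg _), Real.rpow_two]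
      _ ≤ S2 := Finset.sum_le_sum_of_subset_of_nonneg (Finset.subset_univ A)
            (fun x _ _ => Real.rpow_nonneg (abs_nonneg _) _)
  -- tail bound on the complement
  have htail : ∑ x ∈ Finset.univ.filter (fun x => ¬ p x), |S x| ^ t ≤ (1/2:ℝ)^t * St := by
    have hτ : ((1/2:ℝ) * N) ^ t = (1/2:ℝ)^t * (St / 2^n) := by
      rw [Real.mul_rpow (by norm_num) hN0, hNt]
    have hcard : ((Finset.univ.filter (fun x => ¬ p x)).card : ℝ) ≤ 2 ^ n := by
      have h1 : (Finset.univ.filter (fun x => ¬ p x)).card ≤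
          (Finset.univ : Finset (Fin n → Bool)).card :=
        Finset.card_le_card (Finset.filter_subset _ _)
      have h2 : (Finset.univ : Finset (Fin n → Bool)).card = 2 ^ n := by
        simp [Finset.card_univ]
      rw [h2] at h1
      exact_mod_cast h1
    calc ∑ x ∈ Finset.univ.filter (fun x => ¬ p x), |S x| ^ t
        ≤ ∑ x ∈ Finset.univ.filter (fun x => ¬ p x), ((1/2:ℝ)*N)^t := by
          refine Finset.sum_le_sum fun x hx => ?_
          rw [Finset.mem_filter] at hx
          exact Real.rpow_le_rpow (abs_nonneg _)
            (le_of_not_ge (by simpa [hpdef] using hx.2)) ht0.le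
      _ = ((Finset.univ.filter (fun x => ¬ p x)).card : ℝ) * ((1/2:ℝ)*N)^t := by
          rw [Finset.sum_const, nsmul_eq_mul]
      _ ≤ 2^n * ((1/2:ℝ)*N)^t :=
          mul_le_mul_of_nonneg_right hcard (Real.rpow_nonneg (by positivity) _)
      _ = (1/2:ℝ)^t * St := by rw [hτ]; field_simp
  -- hence the sum over A is at least St/2
  have hhalf : St / 2 ≤ ∑ x ∈ A, |S x| ^ t := by
    have hsplit : (∑ x ∈ A, |S x| ^ t) +
        ∑ x ∈ Finset.univ.filter (fun x => ¬ p x), |S x| ^ t = St := by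
      rw [hAdef]
      exact Finset.sum_filter_add_sum_filter_not Finset.univ p _
    have h12 : (1/2:ℝ)^t ≤ 1/2 := by
      calc (1/2:ℝ)^t ≤ (1/2:ℝ)^(1:ℝ) :=
            Real.rpow_le_rpow_of_exponent_ge (by norm_num) (by norm_num) ht
        _ = 1/2 := Real.rpow_one _
    have : (1/2:ℝ)^t * St ≤ (1/2) * St :=
      mul_le_mul_of_nonneg_right h12 hSt0
    linarith
  -- combine everything
  have hK0 : (0:ℝ) ≤ (A.card : ℝ) := Nat.cast_nonneg _
  have key : St^2 / 4 ≤ c^t * St^2 / 2^n * A.card := by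
    calc St^2/4 = (St/2)^2 := by ring
      _ ≤ (∑ x ∈ A, |S x|^t)^2 := by
          apply pow_le_pow_left₀ (by positivity) hhalf
      _ ≤ S2 * A.card := hCS
      _ ≤ c^t * St^2 / 2^n * A.card := mul_le_mul_of_nonneg_right hmom hK0
  have hSt2 : (0:ℝ) < St^2 := by positivity
  have hfin : (1/4:ℝ) * St^2 ≤ (c^t * ((A.card:ℝ)/2^n)) * St^2 := by
    calc (1/4:ℝ)*St^2 = St^2/4 := by ring
      _ ≤ c^t * St^2/2^n * A.card := key
      _ = (c^t * ((A.card:ℝ)/2^n)) * St^2 := by ring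
  exact le_of_mul_le_mul_right hfin hSt2
end

section
/- (Hitczenko–Kwapień) Let a₁ ≥ a₂ ≥ ... ≥ aₙ ≥ 0 and S = Σᵢ₌₁ⁿ aᵢrᵢ with rᵢ i.i.d. uniform ±1. Then P(|S| ≥ (E S²)^{1/2}) > 1/10. -/
/-!
Write `S = Σ aᵢ rᵢ` and normalise `Σ aᵢ² = 1`. The even moments `E S^{2k}` (`k ≤ 5`) are
polynomials in the power sums `pⱼ = Σ aᵢ^j`, obtained by conditioning on one sign at a time.
If `q` is a polynomial with `q(t) ≤ 1{t ≥ τ}` for `t ≥ 0`, then `P(S² ≥ τ) ≥ E q(S²)`, a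
polynomial in `p₄, …, p₁₀`; since `p_{2k+2} ≤ (max aᵢ²) p_{2k}`, this is bounded below.

If `a₁² ≤ 121/400`, a quintic `q` with `τ = 1` gives `P(S² ≥ 1) ≥ 41/400`. Otherwise condition
on `r₁`: with the better of the two signs, `|S| ≥ 1` as soon as the rest `T` of the sum has
`|T| ≥ 1 - a₁`, and `(1 - a₁)² ≤ 9/31 · E T²` because `a₁ > 11/20`; a quartic `q` with
`τ = 9/31` gives `P(T² ≥ 9/31 · E T²) ≥ 7/30`, hence `P(|S| ≥ 1) ≥ 7/60`.
-/

open Classical Finset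
open scoped BigOperators

lemma expect_bool {K : Type*} [Semifield K] [CharZero K] (g : Bool → K) :
    𝔼 b, g b = (g true + g false) / 2 := by
  rw [Fintype.expect_eq_sum_div_card]; simp [add_comm]

lemma expect_pi_fin_succ {K : Type*} [Semifield K] [CharZero K] {n : ℕ}
    (f : (Fin (n + 1) → Bool) → K) :
    𝔼 y, f y = 𝔼 x, (f (Fin.cons true x) + f (Fin.cons false x)) / 2 := by
  rw [← Fintype.expect_equiv (Fin.consEquiv fun _ => Bool) (fun p => f (Fin.cons p.1 p.2)) f
    fun _ => rfl, ← univ_product_univ, expect_product, expect_comm]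
  exact expect_congr rfl fun x _ => expect_bool _

/-- The quartic that vanishes at `9/31` and touches `1` at `16/5` and `13`. -/
noncomputable def quarticMinorant (t : ℝ) : ℝ :=
  -2095013727 / 7893789409 + 7779740904 / 7893789409 * t - 7980144961 / 31575157636 * t ^ 2
    + 374026005 / 15787578818 * t ^ 3 - 23088025 / 31575157636 * t ^ 4

/-- The quintic that vanishes at `0` and `1` and touches `1` at `23/5` and `271/20`. -/
noncomputable def quinticMinorant (t : ℝ) : ℝ :=
  -40827099725 / 127230015492 * t + 54080788831675 / 132170781093606 * t ^ 2
    - 76313898809125 / 793024686561636 * t ^ 3 + 540738171250 / 66085390546803 * t ^ 4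
    - 46094912500 / 198256171640409 * t ^ 5

lemma quarticMinorant_le (t : ℝ) : quarticMinorant t ≤ if 9 / 31 ≤ t then 1 else 0 := by
  unfold quarticMinorant
  split_ifs with h
  · nlinarith [sq_nonneg ((t - 16/5) * (t - 13))]
  · have h1 : (0:ℝ) ≤ 9/31 - t := by linarith [not_le.mp h]
    have h2 : (0:ℝ) ≤ 16/5 + 13 - 9/31 - t := by linarith
    nlinarith [mul_nonneg h1 h2, sq_nonneg ((16/5 - t)*(13 - t) + (16/5 - 9/31)*(13 - 9/31)),
      mul_nonneg (mul_nonneg h1 h2) (mul_nonneg h1 h2)]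

lemma quinticMinorant_le {t : ℝ} (ht : 0 ≤ t) : quinticMinorant t ≤ if 1 ≤ t then 1 else 0 := by
  unfold quinticMinorant
  split_ifs with h
  · nlinarith [sq_nonneg ((t - 23/5) * (t - 271/20)),
      mul_nonneg (sq_nonneg ((t - 23/5) * (t - 271/20)))
        (by linarith : (0:ℝ) ≤ t + 20412324/18437965)]
  · have h1 : t ≤ 1 := (not_le.mp h).le
    have hw : (0:ℝ) ≤ 40827099725/127230015492 + (-70009420404125/793024686561636) * t
        + (1576119601250/198256171640409) * t^2 + (-46094912500/198256171640409) * t^3 := by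
      nlinarith [pow_le_one₀ ht h1 (n := 3), pow_le_one₀ ht h1 (n := 2), sq_nonneg t,
        mul_nonneg ht ht]
    nlinarith [mul_nonneg (mul_nonneg ht (by linarith : (0:ℝ) ≤ 1 - t)) hw]

lemma quartic_moment_bound {p₄ p₆ p₈ : ℝ} (h₄ : 0 ≤ p₄) (h₄' : p₄ ≤ 1) (h₆ : 0 ≤ p₆)
    (h₈ : 0 ≤ p₈) :
    7 / 30 ≤ -2095013727 / 7893789409 + 7779740904 / 7893789409
        - 7980144961 / 31575157636 * (3 - 2 * p₄)
        + 374026005 / 15787578818 * (15 - 30 * p₄ + 16 * p₆)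
        - 23088025 / 31575157636 * (105 - 420 * p₄ + 140 * p₄ ^ 2 + 448 * p₆ - 272 * p₈) := by
  nlinarith [mul_nonneg (by linarith : (0:ℝ) ≤ 1 - p₄)
      (by nlinarith : (0:ℝ) ≤ 8311689/15787578818 + (808080875/7893789409) * p₄)]

lemma quintic_moment_bound {p₄ p₆ p₈ p₁₀ : ℝ} (h₄ : 0 ≤ p₄) (h₆ : 0 ≤ p₆) (h₈ : 0 ≤ p₈)
    (h₄' : p₄ ≤ 121 / 400) (h₆' : p₆ ≤ 121 / 400 * p₄) (h₁₀ : p₁₀ ≤ 121 / 400 * p₈) :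
    41 / 400 ≤ -40827099725 / 127230015492 + 54080788831675 / 132170781093606 * (3 - 2 * p₄)
        - 76313898809125 / 793024686561636 * (15 - 30 * p₄ + 16 * p₆)
        + 540738171250 / 66085390546803 * (105 - 420 * p₄ + 140 * p₄ ^ 2 + 448 * p₆ - 272 * p₈)
        - 46094912500 / 198256171640409 * (945 - 6300 * p₄ + 6300 * p₄ ^ 2 + 10080 * p₆
          - 6720 * p₄ * p₆ - 12240 * p₈ + 7936 * p₁₀) := by
  nlinarith [mul_nonneg h₄ (by linarith : (0:ℝ) ≤ 121/400 - p₄), mul_nonneg h₄ h₆,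
    mul_nonneg (by linarith : (0:ℝ) ≤ 121/400 * p₄ - p₆) (by linarith : (0:ℝ) ≤ 121/400 - p₄),
    mul_nonneg h₈ h₈]

section Rademacher

variable {n : ℕ}

def boolSign (b : Bool) : ℝ := if b then 1 else -1

/-- The sign vector `x` stands for the Rademacher variables `rᵢ = boolSign (x i)`; averaging over
all `x` is taking expectations. -/
def rademacherSum (a : Fin n → ℝ) (x : Fin n → Bool) : ℝ := ∑ i, a i * boolSign (x i)

noncomputable def prob (p : (Fin n → Bool) → Prop) : ℝ := 𝔼 x, if p x then 1 else 0

def powerSum (a : Fin n → ℝ) (k : ℕ) : ℝ := ∑ i, a i ^ k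

lemma rademacherSum_cons (a : Fin (n + 1) → ℝ) (b : Bool) (x : Fin n → Bool) :
    rademacherSum a (Fin.cons b x) = rademacherSum (Fin.tail a) x + a 0 * boolSign b := by
  simp [rademacherSum, Fin.sum_univ_succ, Fin.tail, add_comm]

lemma rademacherSum_smul (c : ℝ) (a : Fin n → ℝ) (x : Fin n → Bool) :
    rademacherSum (c • a) x = c * rademacherSum a x := by
  simp [rademacherSum, mul_sum, mul_assoc]

lemma expect_comp_rademacherSum_succ (g : ℝ → ℝ) (a : Fin (n + 1) → ℝ) :
    𝔼 x, g (rademacherSum a x) =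
      𝔼 x, (g (rademacherSum (Fin.tail a) x + a 0) +
        g (rademacherSum (Fin.tail a) x - a 0)) / 2 := by
  simp [expect_pi_fin_succ, rademacherSum_cons, boolSign, sub_eq_add_neg]

lemma powerSum_eq_tail_add (a : Fin (n + 1) → ℝ) (k : ℕ) :
    powerSum a k = powerSum (Fin.tail a) k + a 0 ^ k := by
  simp [powerSum, Fin.sum_univ_succ, Fin.tail, add_comm]

lemma powerSum_smul (c : ℝ) (a : Fin n → ℝ) (k : ℕ) :
    powerSum (c • a) k = c ^ k * powerSum a k := by
  simp [powerSum, mul_pow, mul_sum]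

lemma powerSum_two_mul_nonneg (a : Fin n → ℝ) (k : ℕ) : 0 ≤ powerSum a (2 * k) :=
  sum_nonneg fun i _ => by rw [pow_mul]; positivity

lemma powerSum_two_nonneg (a : Fin n → ℝ) : 0 ≤ powerSum a 2 :=
  powerSum_two_mul_nonneg a 1

lemma powerSum_two_mul_add_two_le {a : Fin n → ℝ} {c : ℝ} (h : ∀ i, a i ^ 2 ≤ c) (k : ℕ) :
    powerSum a (2 * k + 2) ≤ c * powerSum a (2 * k) := by
  rw [powerSum, powerSum, mul_sum]
  gcongr with i
  rw [pow_add, pow_mul, mul_comm]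
  exact mul_le_mul_of_nonneg_right (h i) (by positivity)

lemma powerSum_two_inv_sqrt_smul (a : Fin n → ℝ) (hV : 0 < powerSum a 2) :
    powerSum ((√(powerSum a 2))⁻¹ • a) 2 = 1 := by
  rw [powerSum_smul, inv_pow, Real.sq_sqrt hV.le, inv_mul_cancel₀ hV.ne']

lemma expect_rademacherSum_pow (a : Fin n → ℝ) :
    𝔼 x, rademacherSum a x ^ 2 = powerSum a 2 ∧
    𝔼 x, rademacherSum a x ^ 4 = 3 * powerSum a 2 ^ 2 - 2 * powerSum a 4 ∧
    𝔼 x, rademacherSum a x ^ 6 =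
      15 * powerSum a 2 ^ 3 - 30 * powerSum a 2 * powerSum a 4 + 16 * powerSum a 6 ∧
    𝔼 x, rademacherSum a x ^ 8 =
      105 * powerSum a 2 ^ 4 - 420 * powerSum a 2 ^ 2 * powerSum a 4 + 140 * powerSum a 4 ^ 2
        + 448 * powerSum a 2 * powerSum a 6 - 272 * powerSum a 8 ∧
    𝔼 x, rademacherSum a x ^ 10 =
      945 * powerSum a 2 ^ 5 - 6300 * powerSum a 2 ^ 3 * powerSum a 4
        + 6300 * powerSum a 2 * powerSum a 4 ^ 2 + 10080 * powerSum a 2 ^ 2 * powerSum a 6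
        - 6720 * powerSum a 4 * powerSum a 6 - 12240 * powerSum a 2 * powerSum a 8
        + 7936 * powerSum a 10 := by
  induction n with
  | zero => simp [rademacherSum, powerSum]
  | succ n ih =>
    obtain ⟨h2, h4, h6, h8, h10⟩ := ih (Fin.tail a)
    have hpow (k : ℕ) := expect_comp_rademacherSum_succ (· ^ k) a
    simp only [powerSum_eq_tail_add a, hpow]
    refine ⟨?_, ?_, ?_, ?_, ?_⟩ <;>
    · ring_nf
      simp only [expect_add_distrib, ← expect_mul, Fintype.expect_const, h2, h4, h6, h8, h10]
      ring

lemma prob_eq_card_div (p : (Fin n → Bool) → Prop) :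
    prob p = ((univ.filter p).card : ℝ) / 2 ^ n := by
  simp [prob, Fintype.expect_eq_sum_div_card, sum_boole]

lemma prob_true : prob (fun _ : Fin n → Bool => True) = 1 := by
  simp [prob]

lemma prob_mono {p q : (Fin n → Bool) → Prop} (h : ∀ x, p x → q x) : prob p ≤ prob q :=
  expect_le_expect fun x _ => by
    split_ifs with hp hq <;> first | exact le_rfl | exact zero_le_one | exact absurd (h x hp) hq

lemma prob_mul_powerSum_le_sq_eq (a : Fin n → ℝ) (hV : 0 < powerSum a 2) (τ : ℝ) :
    prob (fun x => τ * powerSum a 2 ≤ rademacherSum a x ^ 2) =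
      prob (fun x => τ ≤ rademacherSum ((√(powerSum a 2))⁻¹ • a) x ^ 2) := by
  simp only [prob, rademacherSum_smul, inv_mul_eq_div, div_pow, Real.sq_sqrt hV.le,
    le_div_iff₀ hV]

lemma prob_le_two_mul_prob_cons (a : Fin (n + 1) → ℝ) (ha : 0 ≤ a 0) (θ : ℝ) :
    prob (fun x => θ ≤ |rademacherSum (Fin.tail a) x|) ≤
      2 * prob (fun x => a 0 + θ ≤ |rademacherSum a x|) := by
  rw [prob, prob, expect_comp_rademacherSum_succ (fun s => if a 0 + θ ≤ |s| then 1 else 0),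
    mul_expect]
  refine expect_le_expect fun x _ => ?_
  set t := rademacherSum (Fin.tail a) x
  -- the sign of `a 0` agreeing with that of `t` pushes `|t|` up by `a 0`
  have hchoice : (if θ ≤ |t| then (1 : ℝ) else 0) ≤
      (if a 0 + θ ≤ |t + a 0| then 1 else 0) + (if a 0 + θ ≤ |t - a 0| then 1 else 0) := by
    rcases le_total 0 t with ht | ht
    · have : a 0 + θ ≤ |t + a 0| ↔ θ ≤ |t| := by
        rw [abs_of_nonneg ht, abs_of_nonneg (by linarith)]; constructor <;> intro <;> linarith
      split_ifs <;> simp_all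
    · have : a 0 + θ ≤ |t - a 0| ↔ θ ≤ |t| := by
        rw [abs_of_nonpos ht, abs_of_nonpos (by linarith)]; constructor <;> intro <;> linarith
      split_ifs <;> simp_all
  linarith

lemma expect_quarticMinorant (a : Fin n → ℝ) (h : powerSum a 2 = 1) :
    𝔼 x, quarticMinorant (rademacherSum a x ^ 2) =
      -2095013727 / 7893789409 + 7779740904 / 7893789409
        - 7980144961 / 31575157636 * (3 - 2 * powerSum a 4)
        + 374026005 / 15787578818 * (15 - 30 * powerSum a 4 + 16 * powerSum a 6)
        - 23088025 / 31575157636 * (105 - 420 * powerSum a 4 + 140 * powerSum a 4 ^ 2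
          + 448 * powerSum a 6 - 272 * powerSum a 8) := by
  obtain ⟨m2, m4, m6, m8, -⟩ := expect_rademacherSum_pow a
  simp only [quarticMinorant, ← pow_mul, expect_add_distrib, expect_sub_distrib, ← mul_expect,
    Fintype.expect_const, m2, m4, m6, m8, h]
  ring

lemma expect_quinticMinorant (a : Fin n → ℝ) (h : powerSum a 2 = 1) :
    𝔼 x, quinticMinorant (rademacherSum a x ^ 2) =
      -40827099725 / 127230015492 + 54080788831675 / 132170781093606 * (3 - 2 * powerSum a 4)
        - 76313898809125 / 793024686561636 * (15 - 30 * powerSum a 4 + 16 * powerSum a 6)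
        + 540738171250 / 66085390546803 * (105 - 420 * powerSum a 4 + 140 * powerSum a 4 ^ 2
          + 448 * powerSum a 6 - 272 * powerSum a 8)
        - 46094912500 / 198256171640409 * (945 - 6300 * powerSum a 4 + 6300 * powerSum a 4 ^ 2
          + 10080 * powerSum a 6 - 6720 * powerSum a 4 * powerSum a 6 - 12240 * powerSum a 8
          + 7936 * powerSum a 10) := by
  obtain ⟨m2, m4, m6, m8, m10⟩ := expect_rademacherSum_pow a
  simp only [quinticMinorant, ← pow_mul, expect_add_distrib, expect_sub_distrib, ← mul_expect,
    m2, m4, m6, m8, m10, h]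
  ring

lemma seven_div_thirty_le_prob_of_powerSum_two_eq_one (a : Fin n → ℝ) (h : powerSum a 2 = 1) :
    7 / 30 ≤ prob fun x => 9 / 31 ≤ rademacherSum a x ^ 2 := by
  have hmax : ∀ i, a i ^ 2 ≤ 1 := fun i =>
    h ▸ single_le_sum (f := fun i => a i ^ 2) (fun i _ => sq_nonneg (a i)) (mem_univ i)
  calc (7 : ℝ) / 30 ≤ 𝔼 x, quarticMinorant (rademacherSum a x ^ 2) := by
        rw [expect_quarticMinorant a h]
        refine quartic_moment_bound (powerSum_two_mul_nonneg a 2) ?_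
          (powerSum_two_mul_nonneg a 3) (powerSum_two_mul_nonneg a 4)
        simpa [h] using powerSum_two_mul_add_two_le hmax 1
    _ ≤ _ := expect_le_expect fun x _ => quarticMinorant_le _

lemma forty_one_div_four_hundred_le_prob_of_powerSum_two_eq_one (a : Fin n → ℝ)
    (h : powerSum a 2 = 1) (hmax : ∀ i, a i ^ 2 ≤ 121 / 400) :
    41 / 400 ≤ prob fun x => 1 ≤ rademacherSum a x ^ 2 := by
  have step := powerSum_two_mul_add_two_le hmax
  calc (41 : ℝ) / 400 ≤ 𝔼 x, quinticMinorant (rademacherSum a x ^ 2) := by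
        rw [expect_quinticMinorant a h]
        refine quintic_moment_bound (powerSum_two_mul_nonneg a 2) (powerSum_two_mul_nonneg a 3)
          (powerSum_two_mul_nonneg a 4) ?_ (step 2) (step 4)
        simpa [h] using step 1
    _ ≤ _ := expect_le_expect fun x _ => quinticMinorant_le (sq_nonneg _)

lemma seven_div_thirty_le_prob (a : Fin n → ℝ) :
    7 / 30 ≤ prob fun x => 9 / 31 * powerSum a 2 ≤ rademacherSum a x ^ 2 := by
  rcases (powerSum_two_nonneg a).eq_or_lt with hV | hV
  · simp only [← hV, mul_zero, sq_nonneg, prob_true]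
    norm_num
  · rw [prob_mul_powerSum_le_sq_eq a hV]
    exact seven_div_thirty_le_prob_of_powerSum_two_eq_one _ (powerSum_two_inv_sqrt_smul a hV)

lemma forty_one_div_four_hundred_le_prob (a : Fin n → ℝ)
    (hmax : ∀ i, a i ^ 2 ≤ 121 / 400 * powerSum a 2) :
    41 / 400 ≤ prob fun x => powerSum a 2 ≤ rademacherSum a x ^ 2 := by
  rcases (powerSum_two_nonneg a).eq_or_lt with hV | hV
  · simp only [← hV, sq_nonneg, prob_true]
    norm_num
  · rw [← one_mul (powerSum a 2), prob_mul_powerSum_le_sq_eq a hV]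
    refine forty_one_div_four_hundred_le_prob_of_powerSum_two_eq_one _
      (powerSum_two_inv_sqrt_smul a hV) fun i => ?_
    rw [Pi.smul_apply, smul_eq_mul, mul_pow, inv_pow, Real.sq_sqrt hV.le, inv_mul_le_iff₀ hV]
    linarith [hmax i]

theorem one_div_ten_lt_prob (a : Fin (n + 1) → ℝ) (hmax : ∀ i, |a i| ≤ a 0) :
    1 / 10 < prob fun x => √(powerSum a 2) ≤ |rademacherSum a x| := by
  set V := powerSum a 2
  have hevent (x : Fin (n + 1) → Bool) :
      √V ≤ |rademacherSum a x| ↔ V ≤ rademacherSum a x ^ 2 := by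
    rw [Real.sqrt_le_left (abs_nonneg _), sq_abs]
  have ha0 : 0 ≤ a 0 := (abs_nonneg _).trans (hmax 0)
  by_cases hsmall : a 0 ^ 2 ≤ 121 / 400 * V
  · have hsq (i) : a i ^ 2 ≤ a 0 ^ 2 := sq_le_sq.mpr ((hmax i).trans (le_abs_self _))
    simp only [hevent]
    linarith [forty_one_div_four_hundred_le_prob a fun i => (hsq i).trans hsmall]
  · set W := powerSum (Fin.tail a) 2
    have hs : √V ^ 2 = V := Real.sq_sqrt (powerSum_two_nonneg a)
    have hVW : V = W + a 0 ^ 2 := powerSum_eq_tail_add a 2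
    have hsqrt : a 0 ≤ √V :=
      Real.le_sqrt_of_sq_le (by linarith [powerSum_two_nonneg (Fin.tail a)])
    have hlarge : 11 / 20 * √V < a 0 := by nlinarith [Real.sqrt_nonneg V]
    have hθ : (√V - a 0) ^ 2 ≤ 9 / 31 * W := by
      nlinarith [mul_nonneg (sub_nonneg.2 hsqrt) (sub_nonneg.2 hlarge.le)]
    calc (1 : ℝ) / 10 < 7 / 30 / 2 := by norm_num
      _ ≤ prob (fun x => 9 / 31 * W ≤ rademacherSum (Fin.tail a) x ^ 2) / 2 := by
        gcongr; exact seven_div_thirty_le_prob _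
      _ ≤ prob (fun x => √V - a 0 ≤ |rademacherSum (Fin.tail a) x|) / 2 := by
        gcongr
        refine prob_mono fun x hx => ?_
        simpa [abs_of_nonneg (sub_nonneg.2 hsqrt)] using sq_le_sq.mp (hθ.trans hx)
      _ ≤ prob (fun x => a 0 + (√V - a 0) ≤ |rademacherSum a x|) := by
        linarith [prob_le_two_mul_prob_cons a ha0 (√V - a 0)]
      _ = prob fun x => √V ≤ |rademacherSum a x| := by simp only [add_sub_cancel]

end Rademacher

/-- Hitczenko–Kwapień: for a Rademacher sum with decreasing nonnegative
coefficients, `P(|S| ≥ ‖S‖₂) > 1/10`. -/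
theorem stmt_10 (n : ℕ) (a : Fin n → ℝ)
    (ha : ∀ i j : Fin n, i ≤ j → a j ≤ a i) (ha0 : ∀ i, 0 ≤ a i) :
    1 / 10 <
      ((Finset.univ.filter fun x : Fin n → Bool =>
          Real.sqrt ((∑ y : Fin n → Bool,
              (∑ i, a i * (if y i then (1 : ℝ) else -1)) ^ 2) / 2 ^ n)
            ≤ |∑ i, a i * (if x i then (1 : ℝ) else -1)|).card : ℝ) / 2 ^ n := by
  cases n with
  | zero => norm_num
  | succ n =>
    have hV : (∑ y, rademacherSum a y ^ 2) / 2 ^ (n + 1) = powerSum a 2 := by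
      rw [← (expect_rademacherSum_pow a).1, Fintype.expect_eq_sum_div_card]
      simp
    have key := one_div_ten_lt_prob a fun i => by
      rw [abs_of_nonneg (ha0 i)]; exact ha 0 i (Fin.zero_le i)
    rwa [← hV, prob_eq_card_div] at key
end

section
/- (Hitczenko–Kwapień moment lower bound) Let a₁ ≥ a₂ ≥ ... ≥ aₙ ≥ 0 and S = Σᵢ aᵢrᵢ with rᵢ i.i.d. uniform ±1. Then for every t ≥ 1, (E|S|^t)^{1/t} ≥ (√t / 4)·(Σ_{i>t} aᵢ²)^{1/2}. -/
open Classical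

namespace HK

open Finset


variable {n : ℕ}

noncomputable def R (x : Fin n → Bool) (i : Fin n) : ℝ := if x i then 1 else -1

noncomputable def Ssum (a : Fin n → ℝ) (s : Finset (Fin n)) (x : Fin n → Bool) : ℝ :=
  ∑ i ∈ s, a i * R x i

lemma flip_inv (i : Fin n) :
    Function.Involutive (fun x : Fin n → Bool => Function.update x i (!x i)) := by
  intro x
  funext j
  rcases eq_or_ne j i with rfl | h
  · simp
  · simp [Function.update_of_ne h]

lemma sum_flip (i : Fin n) (φ : (Fin n → Bool) → ℝ) :
    ∑ x : Fin n → Bool, φ (Function.update x i (!x i)) = ∑ x : Fin n → Bool, φ x :=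
  Fintype.sum_bijective _ (flip_inv i).bijective _ _ (fun _ => rfl)

lemma R_update_self (x : Fin n → Bool) (i : Fin n) :
    R (Function.update x i (!x i)) i = - R x i := by
  simp only [R, Function.update_self]
  cases h : x i <;> simp [h]

lemma R_update_other (x : Fin n → Bool) {i j : Fin n} (h : j ≠ i) (b : Bool) :
    R (Function.update x i b) j = R x j := by
  simp only [R, Function.update_of_ne h]

lemma Ssum_update (a : Fin n → ℝ) {s : Finset (Fin n)} {i : Fin n} (hi : i ∉ s)
    (x : Fin n → Bool) (b : Bool) :
    Ssum a s (Function.update x i b) = Ssum a s x := by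
  refine Finset.sum_congr rfl fun j hj => ?_
  have : j ≠ i := fun h => hi (h ▸ hj)
  rw [R_update_other x this b]

lemma R_sq (x : Fin n → Bool) (i : Fin n) : R x i ^ 2 = 1 := by
  simp only [R]; cases h : x i <;> simp [h]

lemma cube_card : Fintype.card (Fin n → Bool) = 2 ^ n := by
  simp [Fintype.card_fun]

lemma sum_one_cube : (∑ _x : Fin n → Bool, (1 : ℝ)) = 2 ^ n := by
  rw [Finset.sum_const, Finset.card_univ, cube_card]
  simp

lemma sum_insert_flip (a : Fin n → ℝ) {s : Finset (Fin n)} {i : Fin n} (hi : i ∉ s)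
    (F : ℝ → ℝ) :
    ∑ x : Fin n → Bool, F (Ssum a (insert i s) x)
      = ∑ x : Fin n → Bool, F (Ssum a s x - a i * R x i) := by
  rw [← sum_flip i (fun x => F (Ssum a (insert i s) x))]
  refine Finset.sum_congr rfl fun x _ => ?_
  congr 1
  rw [Ssum, Finset.sum_insert hi, R_update_self]
  have h1 : (∑ j ∈ s, a j * R (Function.update x i (!x i)) j) = Ssum a s x :=
    Ssum_update a hi x (!x i)
  rw [h1]; ring

lemma Ssum_insert (a : Fin n → ℝ) {s : Finset (Fin n)} {i : Fin n} (hi : i ∉ s)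
    (x : Fin n → Bool) :
    Ssum a (insert i s) x = Ssum a s x + a i * R x i := by
  rw [Ssum, Finset.sum_insert hi, Ssum]; ring


lemma pair_pow_lb (A B : ℝ) (m : ℕ) (hm : 1 ≤ m) :
    2*A^(2*m) + 2*(((2*m).choose 2 : ℕ) : ℝ)*A^(2*m-2)*B^2
      ≤ (A+B)^(2*m) + (A-B)^(2*m) := by
  have hN : 2 ≤ 2*m := by omega
  rw [add_pow, sub_eq_add_neg, add_pow, ← Finset.sum_add_distrib]
  have hterm : ∀ k ∈ Finset.range (2*m+1),
      (0:ℝ) ≤ A ^ k * B ^ (2*m - k) * ((2*m).choose k : ℝ)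
        + A ^ k * (-B) ^ (2*m - k) * ((2*m).choose k : ℝ) := by
    intro k hk
    rcases Nat.even_or_odd (2*m - k) with he | ho
    · have hkN : k ≤ 2*m := by
        simp only [Finset.mem_range] at hk; omega
    -- Even case
      have hek : Even k := by
        have h1 : k = 2*m - (2*m - k) := by omega
        rw [h1]
        exact Even.tsub (even_two_mul m) he
      have h2 : (-B) ^ (2*m - k) = B ^ (2*m - k) := he.neg_pow B
      rw [h2]
      have hA : (0:ℝ) ≤ A ^ k := hek.pow_nonneg A
      have hB : (0:ℝ) ≤ B ^ (2*m-k) := he.pow_nonneg B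
      positivity
    · have h2 : (-B) ^ (2*m - k) = -(B ^ (2*m - k)) := ho.neg_pow B
      rw [h2]; ring_nf
      simp
  have hsub : ({2*m-2, 2*m} : Finset ℕ) ⊆ Finset.range (2*m+1) := by
    intro k hk
    simp only [Finset.mem_insert, Finset.mem_singleton] at hk
    rcases hk with rfl | rfl <;> simp [Finset.mem_range] <;> omega
  have hne : 2*m-2 ≠ 2*m := by omega
  have := Finset.sum_le_sum_of_subset_of_nonneg hsub
    (fun k hk _ => hterm k hk)
  refine le_trans (le_of_eq ?_) this
  rw [Finset.sum_pair hne]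
  have e1 : 2*m - (2*m-2) = 2 := by omega
  have e2 : 2*m - (2*m) = 0 := by omega
  rw [e1, e2]
  have e3 : ((2*m).choose (2*m-2) : ℝ) = ((2*m).choose 2 : ℝ) := by
    norm_cast
    rw [← Nat.choose_symm hN]
  have e4 : (2*m).choose (2*m) = 1 := Nat.choose_self _
  rw [e3, e4]
  have hB2 : (-B)^2 = B^2 := by ring
  rw [hB2]
  push_cast
  ring

noncomputable def esymR (a : Fin n → ℝ) (s : Finset (Fin n)) (m : ℕ) : ℝ :=
  ∑ B ∈ s.powersetCard m, ∏ i ∈ B, (a i)^2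

lemma esymR_zero (a : Fin n → ℝ) (s : Finset (Fin n)) : esymR a s 0 = 1 := by
  simp [esymR]

lemma esymR_nonneg (a : Fin n → ℝ) (s : Finset (Fin n)) (m : ℕ) : 0 ≤ esymR a s m := by
  refine Finset.sum_nonneg fun B _ => Finset.prod_nonneg fun i _ => sq_nonneg _

lemma esymR_empty (a : Fin n → ℝ) (m : ℕ) : esymR a (∅ : Finset (Fin n)) (m+1) = 0 := by
  unfold esymR
  rw [Finset.powersetCard_eq_empty.2 (by simp)]
  simp

lemma esymR_insert (a : Fin n → ℝ) {s : Finset (Fin n)} {i : Fin n} (hi : i ∉ s) (m : ℕ) :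
    esymR a (insert i s) (m+1) = esymR a s (m+1) + (a i)^2 * esymR a s m := by
  unfold esymR
  rw [Finset.powersetCard_succ_insert hi, Finset.sum_union, Finset.sum_image, Finset.mul_sum]
  · congr 1
    refine Finset.sum_congr rfl fun B hB => ?_
    have hiB : i ∉ B := fun h => hi ((Finset.mem_powersetCard.1 hB).1 h)
    rw [Finset.prod_insert hiB]
  · intro B hB C hC hBC
    have hiB : i ∉ B := fun h => hi ((Finset.mem_powersetCard.1 hB).1 h)
    have hiC : i ∉ C := fun h => hi ((Finset.mem_powersetCard.1 hC).1 h)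
    have := congrArg (fun S => Finset.erase S i) hBC
    simpa [Finset.erase_insert hiB, Finset.erase_insert hiC] using this
  · rw [Finset.disjoint_right]
    intro B hB hB'
    obtain ⟨C, hC, rfl⟩ := Finset.mem_image.1 hB
    have : i ∈ insert i C := Finset.mem_insert_self _ _
    exact (fun h => hi ((Finset.mem_powersetCard.1 hB').1 h)) this

lemma esymR_mono (a : Fin n → ℝ) {s u : Finset (Fin n)} (h : s ⊆ u) (m : ℕ) :
    esymR a s m ≤ esymR a u m := by
  refine Finset.sum_le_sum_of_subset_of_nonneg (Finset.powersetCard_mono h)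
    fun B _ _ => Finset.prod_nonneg fun i _ => sq_nonneg _

lemma esymR_erase_identity (a : Fin n → ℝ) (s : Finset (Fin n)) (m : ℕ) :
    ∑ i ∈ s, (a i)^2 * esymR a (s.erase i) m = ((m:ℝ)+1) * esymR a s (m+1) := by
  unfold esymR
  have RHS : ((m:ℝ)+1) * ∑ B ∈ s.powersetCard (m+1), ∏ i ∈ B, (a i)^2
      = ∑ B ∈ s.powersetCard (m+1), ∑ i ∈ B, ∏ j ∈ B, (a j)^2 := by
    rw [Finset.mul_sum]
    refine Finset.sum_congr rfl fun B hB => ?_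
    rw [Finset.sum_const, (Finset.mem_powersetCard.1 hB).2]
    push_cast
    rw [nsmul_eq_mul]
    push_cast
    ring
  rw [RHS]
  have LHS : ∀ i ∈ s, (a i)^2 * ∑ B ∈ (s.erase i).powersetCard m, ∏ j ∈ B, (a j)^2
      = ∑ B ∈ (s.erase i).powersetCard m, ∏ j ∈ insert i B, (a j)^2 := by
    intro i hi
    rw [Finset.mul_sum]
    refine Finset.sum_congr rfl fun B hB => ?_
    have hiB : i ∉ B := fun h =>
      (Finset.notMem_erase i s) ((Finset.mem_powersetCard.1 hB).1 h)
    rw [Finset.prod_insert hiB]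
  rw [Finset.sum_congr rfl LHS]
  rw [Finset.sum_sigma', Finset.sum_sigma']
  refine Finset.sum_nbij' (fun p => ⟨insert p.1 p.2, p.1⟩) (fun p => ⟨p.2, p.1.erase p.2⟩)
    ?_ ?_ ?_ ?_ ?_
  · rintro ⟨i, B⟩ hp
    simp only [Finset.mem_sigma] at hp ⊢
    obtain ⟨his, hB⟩ := hp
    obtain ⟨hBsub, hBcard⟩ := Finset.mem_powersetCard.1 hB
    have hiB : i ∉ B := fun h => (Finset.notMem_erase i s) (hBsub h)
    constructor
    · exact Finset.mem_powersetCard.2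
        ⟨Finset.insert_subset his (hBsub.trans (Finset.erase_subset _ _)),
         by rw [Finset.card_insert_of_notMem hiB, hBcard]⟩
    · exact Finset.mem_insert_self _ _
  · rintro ⟨C, i⟩ hp
    simp only [Finset.mem_sigma] at hp ⊢
    obtain ⟨hC, hiC⟩ := hp
    obtain ⟨hCsub, hCcard⟩ := Finset.mem_powersetCard.1 hC
    constructor
    · exact hCsub hiC
    · refine Finset.mem_powersetCard.2 ⟨?_, ?_⟩
      · intro j hj
        have hji : j ≠ i := Finset.ne_of_mem_erase hj
        exact Finset.mem_erase.2 ⟨hji, hCsub (Finset.mem_of_mem_erase hj)⟩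
      · rw [Finset.card_erase_of_mem hiC, hCcard]; rfl
  · rintro ⟨i, B⟩ hp
    simp only [Finset.mem_sigma] at hp
    obtain ⟨his, hB⟩ := hp
    have hiB : i ∉ B := fun h =>
      (Finset.notMem_erase i s) ((Finset.mem_powersetCard.1 hB).1 h)
    simp [Finset.erase_insert hiB]
  · rintro ⟨C, i⟩ hp
    simp only [Finset.mem_sigma] at hp
    obtain ⟨hC, hiC⟩ := hp
    simp [Finset.insert_erase hiC]
  · rintro ⟨i, B⟩ hp
    rfl

lemma esymR_lb (a : Fin n → ℝ) (M : ℝ) :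
    ∀ (m : ℕ) (s : Finset (Fin n)), (∀ i ∈ s, (a i)^2 ≤ M) →
      ((m:ℝ) * M ≤ ∑ i ∈ s, (a i)^2) →
      (∏ j ∈ Finset.range m, (∑ i ∈ s, (a i)^2 - (j:ℝ) * M))
        ≤ (m.factorial : ℝ) * esymR a s m := by
  intro m
  induction m with
  | zero => intro s _ _; simp [esymR_zero]
  | succ m ih =>
    intro s hM hW
    rcases s.eq_empty_or_nonempty with rfl | hs
    · rw [Finset.prod_eq_zero (Finset.mem_range.2 (Nat.succ_pos m))]
      · have h0 : (0:ℝ) ≤ esymR a (∅ : Finset (Fin n)) (m+1) :=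
          Finset.sum_nonneg fun B _ => Finset.prod_nonneg fun i _ => sq_nonneg _
        positivity
      · simp
    · obtain ⟨i0, hi0⟩ := hs
      have hM0 : 0 ≤ M := le_trans (sq_nonneg (a i0)) (hM i0 hi0)
      set W := ∑ i ∈ s, (a i)^2 with hWdef
      have hWnn : ((m:ℝ)+1) * M ≤ W := by push_cast at hW; linarith
      have hsplit : (∏ j ∈ Finset.range (m+1), (W - (j:ℝ) * M))
          = (∏ j ∈ Finset.range m, (W - ((j:ℝ)+1) * M)) * W := by
        rw [Finset.prod_range_succ']
        congr 1
        · refine Finset.prod_congr rfl fun j _ => ?_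
          push_cast; ring
        · simp
      rw [hsplit]
      have key : ∀ i ∈ s, (a i)^2 * (∏ j ∈ Finset.range m, (W - ((j:ℝ)+1) * M))
          ≤ (a i)^2 * ((m.factorial : ℝ) * esymR a (s.erase i) m) := by
        intro i hi
        refine mul_le_mul_of_nonneg_left ?_ (sq_nonneg _)
        have hWi : ∑ j ∈ s.erase i, (a j)^2 = W - (a i)^2 := by
          rw [hWdef, ← Finset.add_sum_erase s _ hi]; ring
        have hai : (a i)^2 ≤ M := hM i hi
        have hai0 : 0 ≤ (a i)^2 := sq_nonneg _
        have h1 : (∏ j ∈ Finset.range m, (W - ((j:ℝ)+1) * M))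
            ≤ ∏ j ∈ Finset.range m, (W - (a i)^2 - (j:ℝ) * M) := by
          refine Finset.prod_le_prod (fun j hj => ?_) (fun j hj => ?_)
          · have hjm : (j:ℝ) + 1 ≤ (m:ℝ) + 1 := by
              have := Finset.mem_range.1 hj
              have : (j:ℝ) ≤ (m:ℝ) := by exact_mod_cast le_of_lt this
              linarith
            nlinarith
          · linarith
        have hprem : (m:ℝ) * M ≤ ∑ j ∈ s.erase i, (a j)^2 := by
          rw [hWi]; nlinarith
        have h2 := ih (s.erase i) (fun j hj => hM j (Finset.mem_of_mem_erase hj)) hprem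
        rw [hWi] at h2
        exact le_trans h1 h2
      have hsum : W * (∏ j ∈ Finset.range m, (W - ((j:ℝ)+1) * M))
          ≤ ∑ i ∈ s, (a i)^2 * ((m.factorial : ℝ) * esymR a (s.erase i) m) := by
        rw [hWdef, Finset.sum_mul]
        exact Finset.sum_le_sum key
      have hid : ∑ i ∈ s, (a i)^2 * ((m.factorial : ℝ) * esymR a (s.erase i) m)
          = (m.factorial : ℝ) * (((m:ℝ)+1) * esymR a s (m+1)) := by
        rw [← esymR_erase_identity a s m, Finset.mul_sum]
        refine Finset.sum_congr rfl fun i _ => by ring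
      rw [hid] at hsum
      calc (∏ j ∈ Finset.range m, (W - ((j:ℝ)+1) * M)) * W
          = W * (∏ j ∈ Finset.range m, (W - ((j:ℝ)+1) * M)) := by ring
        _ ≤ (m.factorial : ℝ) * (((m:ℝ)+1) * esymR a s (m+1)) := hsum
        _ = ((m+1).factorial : ℝ) * esymR a s (m+1) := by
            rw [Nat.factorial_succ]; push_cast; ring

lemma sum_const_cube (c : ℝ) : (∑ _x : Fin n → Bool, c) = 2^n * c := by
  rw [Finset.sum_const, Finset.card_univ, cube_card, nsmul_eq_mul]
  push_cast
  ring

lemma pair_sum (a : Fin n → ℝ) {s : Finset (Fin n)} {i : Fin n} (hi : i ∉ s) (F : ℝ → ℝ) :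
    2 * (∑ x : Fin n → Bool, F (Ssum a (insert i s) x))
      = ∑ x : Fin n → Bool, (F (Ssum a s x + a i * R x i) + F (Ssum a s x - a i * R x i)) := by
  rw [Finset.sum_add_distrib, two_mul]
  congr 1
  · exact Finset.sum_congr rfl fun x _ => by rw [Ssum_insert a hi]
  · exact sum_insert_flip a hi F

lemma aiR_sq (a : Fin n → ℝ) (i : Fin n) (x : Fin n → Bool) :
    (a i * R x i)^2 = (a i)^2 := by rw [mul_pow, R_sq, mul_one]

lemma m2_eq (a : Fin n → ℝ) (s : Finset (Fin n)) :
    (∑ x : Fin n → Bool, (Ssum a s x)^2) = 2^n * ∑ i ∈ s, (a i)^2 := by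
  induction s using Finset.induction_on with
  | empty => simp [Ssum]
  | @insert i s hi ih =>
    have h2 := pair_sum a hi (fun y => y^2)
    have h3 : ∀ x ∈ (univ : Finset (Fin n → Bool)),
        (Ssum a s x + a i * R x i)^2 + (Ssum a s x - a i * R x i)^2
        = 2*(Ssum a s x)^2 + 2*(a i)^2 := by
      intro x _
      nlinarith [aiR_sq a i x]
    rw [Finset.sum_congr rfl h3, Finset.sum_add_distrib, ← Finset.mul_sum, ih,
      sum_const_cube] at h2
    rw [Finset.sum_insert hi]
    linarith
  
lemma m4_ub (a : Fin n → ℝ) (s : Finset (Fin n)) :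
    (∑ x : Fin n → Bool, (Ssum a s x)^4) ≤ 3 * 2^n * (∑ i ∈ s, (a i)^2)^2 := by
  induction s using Finset.induction_on with
  | empty => simp [Ssum]
  | @insert i s hi ih =>
    have h2 := pair_sum a hi (fun y => y^4)
    have h3 : ∀ x ∈ (univ : Finset (Fin n → Bool)),
        (Ssum a s x + a i * R x i)^4 + (Ssum a s x - a i * R x i)^4
        = 2*(Ssum a s x)^4 + 12*(Ssum a s x)^2*(a i)^2 + 2*(a i)^4 := by
      intro x _
      have h := aiR_sq a i x
      nlinarith [h, sq_nonneg (Ssum a s x), sq_nonneg (a i * R x i)]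
    rw [Finset.sum_congr rfl h3, Finset.sum_add_distrib, Finset.sum_add_distrib,
      ← Finset.mul_sum, sum_const_cube] at h2
    have h4 : (∑ x : Fin n → Bool, 12*(Ssum a s x)^2*(a i)^2)
        = 12*(a i)^2 * (2^n * ∑ j ∈ s, (a j)^2) := by
      rw [← m2_eq a s, Finset.mul_sum]
      exact Finset.sum_congr rfl fun x _ => by ring
    rw [h4] at h2
    rw [Finset.sum_insert hi]
    have hq : (0:ℝ) ≤ ∑ j ∈ s, (a j)^2 :=
      Finset.sum_nonneg fun j _ => sq_nonneg _
    have hp : (0:ℝ) < 2^n := by positivity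
    nlinarith [ih, h2, hq, sq_nonneg (a i),
      mul_nonneg (mul_nonneg hp.le (sq_nonneg (a i))) hq,
      mul_nonneg hp.le (sq_nonneg ((a i)^2))]

lemma moment_lb (a : Fin n → ℝ) (s : Finset (Fin n)) :
    ∀ m : ℕ, ((2*m).factorial : ℝ) * esymR a s m * 2^n
      ≤ 2^m * ∑ x : Fin n → Bool, (Ssum a s x)^(2*m) := by
  induction s using Finset.induction_on with
  | empty =>
    intro m
    cases m with
    | zero => simp [esymR_zero, sum_const_cube]
    | succ m =>
      rw [esymR_empty]
      have hz : ∀ x ∈ (univ : Finset (Fin n → Bool)),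
          (Ssum a (∅ : Finset (Fin n)) x)^(2*(m+1)) = (0:ℝ) := by
        intro x _
        rw [show Ssum a (∅ : Finset (Fin n)) x = 0 from by simp [Ssum]]
        exact zero_pow (by omega)
      rw [Finset.sum_congr rfl hz]
      simp
  | @insert i s hi ih =>
    intro m
    cases m with
    | zero => simp [esymR_zero, sum_const_cube]
    | succ m =>
      have hm1 : 1 ≤ m + 1 := Nat.le_add_left 1 m
      have h2 := pair_sum a hi (fun y => y^(2*(m+1)))
      have h3 : ∀ x ∈ (univ : Finset (Fin n → Bool)),
          2*(Ssum a s x)^(2*(m+1))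
            + 2*(((2*(m+1)).choose 2 : ℕ) : ℝ)*(Ssum a s x)^(2*(m+1)-2)*(a i)^2
          ≤ (Ssum a s x + a i * R x i)^(2*(m+1)) + (Ssum a s x - a i * R x i)^(2*(m+1)) := by
        intro x _
        have h := pair_pow_lb (Ssum a s x) (a i * R x i) (m+1) hm1
        rw [aiR_sq a i x] at h
        exact h
      have h5 := Finset.sum_le_sum h3
      rw [← h2, Finset.sum_add_distrib, ← Finset.mul_sum] at h5
      set C : ℝ := (((2*(m+1)).choose 2 : ℕ) : ℝ) with hCdef
      have hCnn : (0:ℝ) ≤ C := by rw [hCdef]; positivity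
      set c : ℝ := (a i)^2 with hcdef
      have hA : (0:ℝ) ≤ c := sq_nonneg _
      have hexp : 2*(m+1) - 2 = 2*m := by omega
      have h6 : (∑ x : Fin n → Bool, 2*C*(Ssum a s x)^(2*(m+1)-2)*c)
          = (2*C*c) * ∑ x : Fin n → Bool, (Ssum a s x)^(2*m) := by
        rw [Finset.mul_sum]
        refine Finset.sum_congr rfl fun x _ => ?_
        rw [hexp]; ring
      rw [h6] at h5
      set T2 : ℝ := ∑ x : Fin n → Bool, (Ssum a s x)^(2*(m+1)) with hT2
      set T0 : ℝ := ∑ x : Fin n → Bool, (Ssum a s x)^(2*m) with hT0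
      set X : ℝ := ∑ x : Fin n → Bool, (Ssum a (insert i s) x)^(2*(m+1)) with hX
      have hC : C * 2 * ((2*m).factorial : ℝ) = ((2*(m+1)).factorial : ℝ) := by
        have h := Nat.choose_mul_factorial_mul_factorial
          (show 2 ≤ 2*(m+1) by omega)
        have h22 : 2*(m+1) - 2 = 2*m := by omega
        rw [h22, Nat.factorial_two] at h
        rw [hCdef]
        exact_mod_cast h
      have hih1 := ih (m+1)
      have hih2 := ih m
      have hmul := mul_le_mul_of_nonneg_left hih2 hA
      have step1 : ((2:ℝ)^m) * (2*T2 + (2*C*c)*T0) ≤ 2^m * (2*X) :=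
        mul_le_mul_of_nonneg_left (by linarith) (by positivity)
      have e1 : (2:ℝ)^m * (2*X) = 2^(m+1)*X := by rw [pow_succ]; ring
      have e2 : (2:ℝ)^m * (2*T2 + (2*C*c)*T0)
          = 2^(m+1)*T2 + 2*C*(c*(2^m*T0)) := by rw [pow_succ]; ring
      have step2 : ((2*(m+1)).factorial : ℝ) * esymR a s (m+1) * 2^n
            + 2*C*(c*(((2*m).factorial : ℝ) * esymR a s m * 2^n))
          ≤ 2^(m+1)*T2 + 2*C*(c*(2^m*T0)) := by
        have h7 := mul_le_mul_of_nonneg_left hmul (by positivity : (0:ℝ) ≤ 2*C)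
        have h8 : (2*C)*(c*(((2*m).factorial : ℝ) * esymR a s m * 2^n))
            ≤ (2*C)*(c*(2^m*T0)) := h7
        linarith [hih1]
      have e3 : ((2*(m+1)).factorial : ℝ) * esymR a s (m+1) * 2^n
            + 2*C*(c*(((2*m).factorial : ℝ) * esymR a s m * 2^n))
          = ((2*(m+1)).factorial : ℝ) * (esymR a s (m+1) + c * esymR a s m) * 2^n := by
        rw [← hC]; ring
      rw [esymR_insert a hi]
      rw [← hcdef]
      linarith

noncomputable def setTrue (H : Finset (Fin n)) (x : Fin n → Bool) : Fin n → Bool :=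
  fun j => if j ∈ H then true else x j

lemma force_one (g : (Fin n → Bool) → ℝ) (hg : ∀ x, 0 ≤ g x) (i : Fin n) :
    ∑ x : Fin n → Bool, g (Function.update x i true) ≤ 2 * ∑ x : Fin n → Bool, g x := by
  classical
  have hsplit := Finset.sum_filter_add_sum_filter_not (univ : Finset (Fin n → Bool))
    (fun x => x i = true) (fun x => g (Function.update x i true))
  have h1 : ∑ x ∈ univ.filter (fun x : Fin n → Bool => x i = true),
      g (Function.update x i true)
      = ∑ x ∈ univ.filter (fun x : Fin n → Bool => x i = true), g x := by
    refine Finset.sum_congr rfl fun x hx => ?_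
    have hxi : x i = true := (Finset.mem_filter.1 hx).2
    congr 1
    rw [← hxi]
    exact Function.update_eq_self i x
  have h2 : ∑ x ∈ univ.filter (fun x : Fin n → Bool => ¬ x i = true),
      g (Function.update x i true)
      = ∑ x ∈ univ.filter (fun x : Fin n → Bool => x i = true), g x := by
    refine Finset.sum_nbij' (fun x => Function.update x i true)
      (fun y => Function.update y i false) ?_ ?_ ?_ ?_ ?_
    · intro x hx
      simp [Finset.mem_filter, Function.update_self]
    · intro y hy
      simp [Finset.mem_filter, Function.update_self]
    · intro x hx
      have hxi : x i = false := by
        have := (Finset.mem_filter.1 hx).2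
        simpa using this
      show Function.update (Function.update x i true) i false = x
      rw [Function.update_idem, ← hxi]
      exact Function.update_eq_self i x
    · intro y hy
      have hyi : y i = true := (Finset.mem_filter.1 hy).2
      show Function.update (Function.update y i false) i true = y
      rw [Function.update_idem, ← hyi]
      exact Function.update_eq_self i y
    · intro x hx
      rfl
  have h3 : ∑ x ∈ univ.filter (fun x : Fin n → Bool => x i = true), g x
      ≤ ∑ x : Fin n → Bool, g x :=
    Finset.sum_le_sum_of_subset_of_nonneg (Finset.filter_subset _ _)
      (fun x _ _ => hg x)
  linarith [hsplit, h1, h2, h3]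

lemma setTrue_insert (H : Finset (Fin n)) (i : Fin n) (x : Fin n → Bool) :
    setTrue (insert i H) x = setTrue H (Function.update x i true) := by
  funext j
  unfold setTrue
  rcases eq_or_ne j i with rfl | hji
  · simp
  · by_cases hjH : j ∈ H
    · simp [hjH, Finset.mem_insert, hji]
    · simp [hjH, Finset.mem_insert, hji, Function.update_of_ne hji]

lemma force (g : (Fin n → Bool) → ℝ) (hg : ∀ x, 0 ≤ g x) (H : Finset (Fin n)) :
    ∑ x : Fin n → Bool, g (setTrue H x) ≤ 2^(H.card) * ∑ x : Fin n → Bool, g x := by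
  induction H using Finset.induction_on with
  | empty =>
    have he : ∀ x : Fin n → Bool, setTrue (∅ : Finset (Fin n)) x = x := by
      intro x; funext j; simp [setTrue]
    simp [he]
  | @insert i H hi ih =>
    have h1 : ∑ x : Fin n → Bool, g (setTrue (insert i H) x)
        = ∑ x : Fin n → Bool, (fun y => g (setTrue H y)) (Function.update x i true) := by
      refine Finset.sum_congr rfl fun x _ => ?_
      rw [setTrue_insert]
    rw [h1]
    have h2 := force_one (fun y => g (setTrue H y)) (fun y => hg _) i
    rw [Finset.card_insert_of_notMem hi, pow_succ]
    calc ∑ x : Fin n → Bool, (fun y => g (setTrue H y)) (Function.update x i true)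
        ≤ 2 * ∑ x : Fin n → Bool, g (setTrue H x) := h2
      _ ≤ 2 * (2^(H.card) * ∑ x : Fin n → Bool, g x) := by linarith
      _ = 2^(H.card) * 2 * ∑ x : Fin n → Bool, g x := by ring

lemma rpow_pair_lb {A : ℝ} (hA : 0 ≤ A) (c : ℝ) {t : ℝ} (ht : 1 ≤ t) :
    2 * A ^ t ≤ |A + c| ^ t + |A - c| ^ t := by
  set u := |A + c| with hu
  set v := |A - c| with hv
  have hu0 : 0 ≤ u := abs_nonneg _
  have hv0 : 0 ≤ v := abs_nonneg _
  have hAle : A ≤ (u + v) / 2 := by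
    have h1 : |(A + c) + (A - c)| ≤ u + v := abs_add_le _ _
    have h2 : |(A + c) + (A - c)| = 2 * A := by
      rw [show (A + c) + (A - c) = 2 * A from by ring, abs_of_nonneg (by linarith)]
    linarith
  have ht0 : (0:ℝ) ≤ t := by linarith
  have hstep1 : A ^ t ≤ ((u + v) / 2) ^ t := Real.rpow_le_rpow hA hAle ht0
  have hconv := (convexOn_rpow ht).2 (Set.mem_Ici.2 hu0) (Set.mem_Ici.2 hv0)
    (by norm_num : (0:ℝ) ≤ 1/2) (by norm_num : (0:ℝ) ≤ 1/2) (by norm_num)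
  simp only [smul_eq_mul] at hconv
  have heq : (1/2 : ℝ) * u + (1/2 : ℝ) * v = (u + v) / 2 := by ring
  rw [heq] at hconv
  have : A ^ t ≤ 1/2 * u ^ t + 1/2 * v ^ t := le_trans hstep1 hconv
  linarith

lemma flipAll_sum (φ : (Fin n → Bool) → ℝ) :
    ∑ x : Fin n → Bool, φ (fun j => !x j) = ∑ x : Fin n → Bool, φ x := by
  have hinv : Function.Involutive (fun x : Fin n → Bool => fun j => !x j) := by
    intro x; funext j; simp
  exact Fintype.sum_bijective _ hinv.bijective _ _ (fun _ => rfl)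

lemma Ssum_flipAll (a : Fin n → ℝ) (s : Finset (Fin n)) (x : Fin n → Bool) :
    Ssum a s (fun j => !x j) = - Ssum a s x := by
  rw [Ssum, Ssum, ← Finset.sum_neg_distrib]
  refine Finset.sum_congr rfl fun i _ => ?_
  have : R (fun j => !x j) i = - R x i := by
    simp only [R]
    rcases Bool.eq_false_or_eq_true (x i) with h | h <;> simp [h]
  rw [this]; ring

lemma head_lb (a : Fin n → ℝ) (H : Finset (Fin n)) {t : ℝ} (ht : 1 ≤ t)
    (hA : 0 ≤ ∑ i ∈ H, a i) :
    2^n * (∑ i ∈ H, a i) ^ t ≤ 2^(H.card) * ∑ x : Fin n → Bool, |Ssum a univ x| ^ t := by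
  set A := ∑ i ∈ H, a i with hAdef
  have hg : ∀ x : Fin n → Bool, (0:ℝ) ≤ |Ssum a univ x| ^ t :=
    fun x => Real.rpow_nonneg (abs_nonneg _) t
  have hforce := force (fun x => |Ssum a univ x| ^ t) hg H
  have hdecomp : ∀ x : Fin n → Bool, Ssum a univ (setTrue H x) = A + Ssum a Hᶜ x := by
    intro x
    rw [Ssum, ← Finset.sum_add_sum_compl H (fun i => a i * R (setTrue H x) i)]
    congr 1
    · rw [hAdef]
      refine Finset.sum_congr rfl fun i hi => ?_
      have : R (setTrue H x) i = 1 := by simp [R, setTrue, hi]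
      rw [this, mul_one]
    · rw [Ssum]
      refine Finset.sum_congr rfl fun i hi => ?_
      have hiH : i ∉ H := Finset.mem_compl.1 hi
      have : R (setTrue H x) i = R x i := by simp [R, setTrue, hiH]
      rw [this]
  have hmid : 2^n * (2 * A ^ t) ≤ 2 * ∑ x : Fin n → Bool, |A + Ssum a Hᶜ x| ^ t := by
    have hpair : 2 * ∑ x : Fin n → Bool, |A + Ssum a Hᶜ x| ^ t
        = ∑ x : Fin n → Bool, (|A + Ssum a Hᶜ x| ^ t + |A - Ssum a Hᶜ x| ^ t) := by
      rw [Finset.sum_add_distrib, two_mul]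
      congr 1
      rw [← flipAll_sum (fun x => |A + Ssum a Hᶜ x| ^ t)]
      refine Finset.sum_congr rfl fun x _ => ?_
      rw [Ssum_flipAll]
      ring_nf
    rw [hpair]
    have hlow : ∀ x ∈ (univ : Finset (Fin n → Bool)),
        2 * A ^ t ≤ |A + Ssum a Hᶜ x| ^ t + |A - Ssum a Hᶜ x| ^ t :=
      fun x _ => rpow_pair_lb hA _ ht
    calc (2:ℝ)^n * (2 * A ^ t) = ∑ _x : Fin n → Bool, 2 * A ^ t := by
          rw [Finset.sum_const, Finset.card_univ, cube_card, nsmul_eq_mul]; push_cast; ring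
      _ ≤ _ := Finset.sum_le_sum hlow
  have hmid2 : ∑ x : Fin n → Bool, |A + Ssum a Hᶜ x| ^ t
      = ∑ x : Fin n → Bool, |Ssum a univ (setTrue H x)| ^ t := by
    refine Finset.sum_congr rfl fun x _ => ?_
    rw [hdecomp x]
  linarith [hforce, hmid, hmid2.symm.le, hmid2.le]

lemma jensen_rpow (u : (Fin n → Bool) → ℝ) (hu : ∀ x, 0 ≤ u x) {p : ℝ} (hp : 1 ≤ p) :
    ((∑ x : Fin n → Bool, u x) / 2^n) ^ p ≤ (∑ x : Fin n → Bool, (u x) ^ p) / 2^n := by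
  have hcard : (∑ _x : Fin n → Bool, ((2:ℝ)^n)⁻¹) = 1 := by
    rw [Finset.sum_const, Finset.card_univ, cube_card, nsmul_eq_mul]
    push_cast
    field_simp
  have h := (convexOn_rpow hp).map_sum_le (t := (univ : Finset (Fin n → Bool)))
    (w := fun _ => ((2:ℝ)^n)⁻¹) (p := u)
    (fun _ _ => by positivity) hcard (fun x _ => Set.mem_Ici.2 (hu x))
  simp only [smul_eq_mul] at h
  have e1 : (∑ x : Fin n → Bool, ((2:ℝ)^n)⁻¹ * u x) = (∑ x : Fin n → Bool, u x) / 2^n := by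
    rw [← Finset.mul_sum]; field_simp
  have e2 : (∑ x : Fin n → Bool, ((2:ℝ)^n)⁻¹ * (u x) ^ p)
      = (∑ x : Fin n → Bool, (u x) ^ p) / 2^n := by
    rw [← Finset.mul_sum]; field_simp
  rw [e1, e2] at h
  exact h

lemma fact_2m_ge (m : ℕ) : (m:ℝ)^m * (m.factorial : ℝ) ≤ ((2*m).factorial : ℝ) := by
  have h : m^m * m.factorial ≤ (2*m).factorial := by
    have h1 : (2*m).factorial = ∏ i ∈ Finset.range (2*m), (i+1) := by
      rw [Finset.prod_range_add_one_eq_factorial]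
    have h2 : m.factorial = ∏ i ∈ Finset.range m, (i+1) := by
      rw [Finset.prod_range_add_one_eq_factorial]
    rw [h1, h2, two_mul, Finset.prod_range_add]
    rw [mul_comm (m^m)]
    refine Nat.mul_le_mul_left _ ?_
    calc m^m = ∏ _i ∈ Finset.range m, m := by rw [Finset.prod_const, Finset.card_range]
      _ ≤ ∏ i ∈ Finset.range m, (m + i + 1) := Finset.prod_le_prod' fun i _ => by omega
  exact_mod_cast h

lemma l1_lb (a : Fin n → ℝ) :
    2^n * Real.sqrt (∑ i, (a i)^2) ≤ Real.sqrt 3 * ∑ x : Fin n → Bool, |Ssum a univ x| := by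
  set Q := ∑ i, (a i)^2 with hQdef
  have hQ0 : 0 ≤ Q := Finset.sum_nonneg fun i _ => sq_nonneg _
  set P1 := ∑ x : Fin n → Bool, |Ssum a univ x| with hP1
  set P2 := ∑ x : Fin n → Bool, (Ssum a univ x)^2 with hP2
  set P3 := ∑ x : Fin n → Bool, |Ssum a univ x|^3 with hP3
  set P4 := ∑ x : Fin n → Bool, (Ssum a univ x)^4 with hP4
  have hP1nn : 0 ≤ P1 := Finset.sum_nonneg fun x _ => abs_nonneg _
  have hP2nn : 0 ≤ P2 := Finset.sum_nonneg fun x _ => sq_nonneg _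
  have hP3nn : 0 ≤ P3 := Finset.sum_nonneg fun x _ => by positivity
  have hcs1 : P2^2 ≤ P1 * P3 := by
    have h := Finset.sum_mul_sq_le_sq_mul_sq (univ : Finset (Fin n → Bool))
      (fun x => Real.sqrt |Ssum a univ x|)
      (fun x => |Ssum a univ x| * Real.sqrt |Ssum a univ x|)
    have e1 : ∀ x : Fin n → Bool,
        Real.sqrt |Ssum a univ x| * (|Ssum a univ x| * Real.sqrt |Ssum a univ x|)
          = (Ssum a univ x)^2 := by
      intro x
      rw [show Real.sqrt |Ssum a univ x| * (|Ssum a univ x| * Real.sqrt |Ssum a univ x|)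
        = (Real.sqrt |Ssum a univ x|)^2 * |Ssum a univ x| from by ring,
        Real.sq_sqrt (abs_nonneg _), ← sq_abs]
      ring
    have e2 : ∀ x : Fin n → Bool, (Real.sqrt |Ssum a univ x|)^2 = |Ssum a univ x| :=
      fun x => Real.sq_sqrt (abs_nonneg _)
    have e3 : ∀ x : Fin n → Bool,
        (|Ssum a univ x| * Real.sqrt |Ssum a univ x|)^2 = |Ssum a univ x|^3 := by
      intro x
      rw [mul_pow, Real.sq_sqrt (abs_nonneg _)]
      ring
    rw [Finset.sum_congr rfl (fun x _ => e1 x), Finset.sum_congr rfl (fun x _ => e2 x),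
      Finset.sum_congr rfl (fun x _ => e3 x)] at h
    exact h
  have hcs2 : P3^2 ≤ P2 * P4 := by
    have h := Finset.sum_mul_sq_le_sq_mul_sq (univ : Finset (Fin n → Bool))
      (fun x => |Ssum a univ x|) (fun x => (Ssum a univ x)^2)
    have e1 : ∀ x : Fin n → Bool, |Ssum a univ x| * (Ssum a univ x)^2
        = |Ssum a univ x|^3 := by
      intro x; rw [← sq_abs]; ring
    have e2 : ∀ x : Fin n → Bool, (|Ssum a univ x|)^2 = (Ssum a univ x)^2 :=
      fun x => sq_abs _
    have e3 : ∀ x : Fin n → Bool, ((Ssum a univ x)^2)^2 = (Ssum a univ x)^4 := by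
      intro x; ring
    rw [Finset.sum_congr rfl (fun x _ => e1 x), Finset.sum_congr rfl (fun x _ => e2 x),
      Finset.sum_congr rfl (fun x _ => e3 x)] at h
    exact h
  have hm2 : P2 = 2^n * Q := m2_eq a univ
  have hm4 : P4 ≤ 3 * 2^n * Q^2 := m4_ub a univ
  rcases eq_or_lt_of_le hQ0 with hQz | hQpos
  · rw [← hQz, Real.sqrt_zero, mul_zero]
    positivity
  · have hp : (0:ℝ) < 2^n := by positivity
    have hstep : P3^2 ≤ 3*2^n*Q^2*P2 := by
      have h1 : P2*P4 ≤ P2*(3*2^n*Q^2) := mul_le_mul_of_nonneg_left hm4 hP2nn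
      calc P3^2 ≤ P2*P4 := hcs2
        _ ≤ P2*(3*2^n*Q^2) := h1
        _ = 3*2^n*Q^2*P2 := by ring
    have hchain : P2^4 ≤ 3*((2:ℝ)^n)^2*Q^3*P1^2 := by
      calc P2^4 = (P2^2)^2 := by ring
        _ ≤ (P1*P3)^2 := pow_le_pow_left₀ (sq_nonneg P2) hcs1 2
        _ = P1^2*P3^2 := by ring
        _ ≤ P1^2*(3*2^n*Q^2*P2) := mul_le_mul_of_nonneg_left hstep (sq_nonneg P1)
        _ = 3*((2:ℝ)^n)^2*Q^3*P1^2 := by rw [hm2]; ring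
    have hfac : (0:ℝ) < ((2:ℝ)^n)^2*Q^3 := by positivity
    have key : ((2:ℝ)^n)^2 * Q ≤ 3 * P1^2 := by
      refine le_of_mul_le_mul_right ?_ hfac
      calc ((2:ℝ)^n)^2*Q*(((2:ℝ)^n)^2*Q^3) = ((2:ℝ)^n*Q)^4 := by ring
        _ = P2^4 := by rw [hm2]
        _ ≤ 3*((2:ℝ)^n)^2*Q^3*P1^2 := hchain
        _ = 3*P1^2*(((2:ℝ)^n)^2*Q^3) := by ring
    have hgoal_sq : ((2:ℝ)^n * Real.sqrt Q)^2 ≤ (Real.sqrt 3 * P1)^2 := by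
      rw [mul_pow, mul_pow, Real.sq_sqrt hQ0, Real.sq_sqrt (by norm_num : (0:ℝ) ≤ 3)]
      linarith
    have h1 := Real.sqrt_le_sqrt hgoal_sq
    rwa [Real.sqrt_sq (by positivity), Real.sqrt_sq (by positivity)] at h1

end HK

open HK Finset

set_option maxHeartbeats 1000000 in
/-- Hitczenko–Kwapień moment lower bound: for a Rademacher sum with decreasing
nonnegative coefficients and `t ≥ 1`,
`‖S‖_t ≥ (√t/4)·(∑_{i>t} aᵢ²)^{1/2}` (indices 1-based). -/
theorem stmt_11 (n : ℕ) (a : Fin n → ℝ) (t : ℝ) (ht : 1 ≤ t)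
    (ha : ∀ i j : Fin n, i ≤ j → a j ≤ a i) (ha0 : ∀ i, 0 ≤ a i) :
    Real.sqrt t / 4 *
        Real.sqrt (∑ i ∈ Finset.univ.filter (fun i : Fin n => t < (i : ℕ) + 1), a i ^ 2)
      ≤ ((∑ x : Fin n → Bool,
          |∑ i, a i * (if x i then (1 : ℝ) else -1)| ^ t) / 2 ^ n) ^ (1 / t) := by
  classical
  have ht0 : (0:ℝ) < t := lt_of_lt_of_le one_pos ht
  have htne : t ≠ 0 := ne_of_gt ht0
  set tail := Finset.univ.filter (fun i : Fin n => t < (i : ℕ) + 1) with htaildef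
  set σsq := ∑ i ∈ tail, a i ^ 2 with hσdef
  have hσsq0 : (0:ℝ) ≤ σsq := Finset.sum_nonneg fun i _ => sq_nonneg _
  have hSx : ∀ x : Fin n → Bool,
      (∑ i, a i * (if x i then (1:ℝ) else -1)) = Ssum a Finset.univ x := by
    intro x
    refine Finset.sum_congr rfl fun i _ => ?_
    rfl
  set P : ℝ := ∑ x : Fin n → Bool, |Ssum a Finset.univ x| ^ t with hPdef
  have hPeq : (∑ x : Fin n → Bool, |∑ i, a i * (if x i then (1:ℝ) else -1)| ^ t) = P := by
    rw [hPdef]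
    exact Finset.sum_congr rfl fun x _ => by rw [hSx]
  rw [hPeq]
  have hPnn : 0 ≤ P :=
    Finset.sum_nonneg fun x _ => Real.rpow_nonneg (abs_nonneg _) _
  have h2npos : (0:ℝ) < 2^n := by positivity
  set c : ℝ := Real.sqrt t / 4 * Real.sqrt σsq with hcdef
  have hc0 : 0 ≤ c := by positivity
  suffices hkey : c ^ t ≤ P / 2^n by
    have h1 : (c ^ t) ^ (1/t) ≤ (P / 2^n) ^ (1/t) :=
      Real.rpow_le_rpow (Real.rpow_nonneg hc0 t) hkey (by positivity)
    rwa [← Real.rpow_mul hc0, mul_one_div, div_self htne, Real.rpow_one] at h1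
  rcases lt_or_ge t 2 with ht2 | ht2
  · -- case 1 ≤ t < 2 : via L1 bound
    set Q := ∑ i, a i ^ 2 with hQdef
    have hQ0 : (0:ℝ) ≤ Q := Finset.sum_nonneg fun i _ => sq_nonneg _
    have hsub : σsq ≤ Q := by
      rw [hσdef, hQdef]
      exact Finset.sum_le_sum_of_subset_of_nonneg (Finset.filter_subset _ _)
        (fun i _ _ => sq_nonneg _)
    set P1 := ∑ x : Fin n → Bool, |Ssum a Finset.univ x| with hP1def
    have hP1nn : 0 ≤ P1 := Finset.sum_nonneg fun x _ => abs_nonneg _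
    have hL1 := l1_lb a
    have hs3 : (0:ℝ) < Real.sqrt 3 := Real.sqrt_pos.2 (by norm_num)
    have hE1 : c ≤ P1 / 2^n := by
      have h1 : Real.sqrt t ≤ Real.sqrt 2 := Real.sqrt_le_sqrt ht2.le
      have h2 : Real.sqrt σsq ≤ Real.sqrt Q := Real.sqrt_le_sqrt hsub
      have h3 : c ≤ Real.sqrt 2 / 4 * Real.sqrt Q := by
        rw [hcdef]
        apply mul_le_mul (by linarith) h2 (Real.sqrt_nonneg _) (by positivity)
      have h6 : Real.sqrt 2 * Real.sqrt 3 ≤ 4 := by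
        rw [← Real.sqrt_mul (by norm_num : (0:ℝ) ≤ 2) 3]
        calc Real.sqrt (2*3) ≤ Real.sqrt 16 := Real.sqrt_le_sqrt (by norm_num)
          _ = 4 := by
              rw [show (16:ℝ) = 4^2 by norm_num, Real.sqrt_sq (by norm_num : (0:ℝ) ≤ 4)]
      have h4 : Real.sqrt 2 / 4 * Real.sqrt Q ≤ Real.sqrt Q / Real.sqrt 3 := by
        rw [div_mul_eq_mul_div, div_le_div_iff₀ (by norm_num) hs3]
        calc Real.sqrt 2 * Real.sqrt Q * Real.sqrt 3
            = (Real.sqrt 2 * Real.sqrt 3) * Real.sqrt Q := by ring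
          _ ≤ 4 * Real.sqrt Q :=
              mul_le_mul_of_nonneg_right h6 (Real.sqrt_nonneg _)
          _ = Real.sqrt Q * 4 := by ring
      have h5 : Real.sqrt Q / Real.sqrt 3 ≤ P1 / 2^n := by
        rw [div_le_div_iff₀ hs3 h2npos]
        calc Real.sqrt Q * 2^n = 2^n * Real.sqrt Q := by ring
          _ ≤ Real.sqrt 3 * P1 := hL1
          _ = P1 * Real.sqrt 3 := by ring
      linarith
    have hJ := jensen_rpow (fun x => |Ssum a Finset.univ x|) (fun x => abs_nonneg _) ht
    calc c ^ t ≤ (P1 / 2^n) ^ t :=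
          Real.rpow_le_rpow hc0 hE1 ht0.le
      _ ≤ P / 2^n := hJ
  · -- case t ≥ 2
    rcases eq_or_lt_of_le hσsq0 with hz | hσpos
    · rw [hcdef, ← hz, Real.sqrt_zero, mul_zero, Real.zero_rpow htne]
      positivity
    · have htailne : tail.Nonempty := by
        by_contra hne
        rw [Finset.not_nonempty_iff_eq_empty] at hne
        rw [hσdef, hne, Finset.sum_empty] at hσpos
        exact lt_irrefl 0 hσpos
      set i0 := tail.min' htailne with hi0def
      have hi0mem : i0 ∈ tail := tail.min'_mem htailne
      have hi0t : t < ((i0 : ℕ) : ℝ) + 1 := by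
        have := (Finset.mem_filter.1 hi0mem).2
        exact_mod_cast this
      set f := Nat.floor t with hfdef
      have hf1 : 1 ≤ f := Nat.le_floor (by exact_mod_cast ht)
      have hfle : (f:ℝ) ≤ t := Nat.floor_le ht0.le
      have hflt : t < (f:ℝ) + 1 := Nat.lt_floor_add_one t
      have hf1R : (1:ℝ) ≤ (f:ℝ) := by exact_mod_cast hf1
      have ht2f : t ≤ 2*(f:ℝ) := by linarith
      have hfi0 : f ≤ (i0 : ℕ) := by
        have h1 : (f:ℝ) < ((i0:ℕ):ℝ) + 1 := lt_of_le_of_lt hfle hi0t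
        have h2 : f < (i0:ℕ) + 1 := by exact_mod_cast h1
        omega
      have hfn : f ≤ n := le_trans hfi0 (le_of_lt i0.isLt)
      set H := Finset.univ.filter (fun i : Fin n => (i:ℕ) < f) with hHdef
      have hHcard : H.card = f := by
        have hbij : H.card = (Finset.range f).card := by
          refine Finset.card_nbij (i := fun i : Fin n => (i:ℕ)) ?_ ?_ ?_
          · intro i hi
            have : (i:ℕ) < f := (Finset.mem_filter.1 hi).2
            exact Finset.mem_coe.2 (Finset.mem_range.2 this)
          · intro i _ j _ hij
            exact Fin.val_injective hij
          · intro k hk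
            have hkf : k < f := Finset.mem_range.1 (Finset.mem_coe.1 hk)
            refine ⟨⟨k, lt_of_lt_of_le hkf hfn⟩, ?_, rfl⟩
            exact Finset.mem_coe.2 (Finset.mem_filter.2 ⟨Finset.mem_univ _, hkf⟩)
        rw [hbij, Finset.card_range]
      set A := ∑ i ∈ H, a i with hAdef
      have hAnn : 0 ≤ A := Finset.sum_nonneg fun i _ => ha0 i
      have hai0H : ∀ i ∈ H, a i0 ≤ a i := by
        intro i hi
        apply ha i i0
        have hiv : (i:ℕ) < f := (Finset.mem_filter.1 hi).2
        have : (i:ℕ) ≤ (i0:ℕ) := le_trans (le_of_lt hiv) hfi0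
        exact this
      have hAfa : (f:ℝ) * a i0 ≤ A := by
        have h := Finset.card_nsmul_le_sum H a (a i0) hai0H
        rwa [hHcard, nsmul_eq_mul] at h
      set m := Nat.floor (t/2) with hmdef
      have hm1 : 1 ≤ m := Nat.le_floor (by rw [Nat.cast_one, le_div_iff₀ (by norm_num : (0:ℝ) < 2)]; linarith)
      have hm1R : (1:ℝ) ≤ (m:ℝ) := by exact_mod_cast hm1
      have h2m : 2*(m:ℝ) ≤ t := by
        have := Nat.floor_le (show (0:ℝ) ≤ t/2 by linarith)
        linarith
      have h2m2 : t < 2*(m:ℝ) + 2 := by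
        have := Nat.lt_floor_add_one (t/2)
        linarith
      have ht4m : t ≤ 4*(m:ℝ) := by linarith
      by_cases hbig : σsq ≤ 2*(m:ℝ)*(a i0)^2
      · -- big coefficient case
        have hc2 : c ≤ A/2 := by
          have e1 : σsq ≤ t*(a i0)^2 := by
            nlinarith [mul_nonneg (sub_nonneg.2 h2m) (sq_nonneg (a i0))]
          have e2 : t*σsq ≤ (t*(a i0))^2 := by
            have := mul_le_mul_of_nonneg_left e1 ht0.le
            nlinarith [this]
          have e3 : t*(a i0) ≤ 2*(f:ℝ)*(a i0) := mul_le_mul_of_nonneg_right ht2f (ha0 i0)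
          have e4 : (t*(a i0))^2 ≤ (2*(f:ℝ)*(a i0))^2 :=
            pow_le_pow_left₀ (mul_nonneg ht0.le (ha0 i0)) e3 2
          have e6 : ((f:ℝ)*(a i0))^2 ≤ A^2 :=
            pow_le_pow_left₀ (mul_nonneg (Nat.cast_nonneg f) (ha0 i0)) hAfa 2
          have e5 : (2*(f:ℝ)*(a i0))^2 = 4*((f:ℝ)*(a i0))^2 := by ring
          have e7 : (2*A)^2 = 4*A^2 := by ring
          have h2 : t*σsq ≤ (2*A)^2 := by
            rw [e7]
            rw [e5] at e4
            linarith
          have h3 : Real.sqrt (t*σsq) ≤ 2*A := by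
            calc Real.sqrt (t*σsq) ≤ Real.sqrt ((2*A)^2) := Real.sqrt_le_sqrt h2
              _ = 2*A := Real.sqrt_sq (by linarith)
          have h1 : c = Real.sqrt (t*σsq) / 4 := by
            rw [hcdef, Real.sqrt_mul ht0.le]
            ring
          rw [h1]
          linarith
        have hHd := head_lb a H ht hAnn
        rw [hHcard] at hHd
        have h2f : (2:ℝ)^f ≤ (2:ℝ)^t := by
          rw [← Real.rpow_natCast 2 f]
          exact Real.rpow_le_rpow_of_exponent_le one_le_two hfle
        have hP2 : 2^n * A^t ≤ 2^t * P := by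
          calc (2:ℝ)^n * A^t ≤ 2^f * P := hHd
            _ ≤ 2^t * P := mul_le_mul_of_nonneg_right h2f hPnn
        have hAt : (A/2)^t ≤ P/2^n := by
          rw [Real.div_rpow hAnn (by norm_num : (0:ℝ) ≤ 2)]
          rw [div_le_div_iff₀ (by positivity) h2npos]
          have h2t2 : (2:ℝ)^t = Real.rpow 2 t := rfl
          calc A^t * 2^n = 2^n * A^t := by ring
            _ ≤ 2^t * P := hP2
            _ = P * 2^t := by ring
        calc c^t ≤ (A/2)^t := Real.rpow_le_rpow hc0 hc2 ht0.le
          _ ≤ P/2^n := hAt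
      · -- small coefficients case
        push_neg at hbig
        have hM : ∀ j ∈ tail, (a j)^2 ≤ (a i0)^2 := by
          intro j hj
          exact pow_le_pow_left₀ (ha0 j) (ha i0 j (tail.min'_le j hj)) 2
        have hWM : (m:ℝ)*(a i0)^2 ≤ σsq := by
          nlinarith [sq_nonneg (a i0), hm1R]
        have hesym := esymR_lb a ((a i0)^2) m tail hM (by rw [← hσdef]; exact hWM)
        rw [← hσdef] at hesym
        have hfac_lb : (σsq/2)^m ≤ ∏ j ∈ Finset.range m, (σsq - (j:ℝ)*(a i0)^2) := by
          have h := Finset.prod_le_prod (f := fun _ : ℕ => σsq/2)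
            (g := fun j : ℕ => σsq - (j:ℝ)*(a i0)^2)
            (s := Finset.range m)
            (fun j _ => by linarith)
            (fun j hj => by
              have hjm : (j:ℝ) ≤ (m:ℝ) - 1 := by
                have := Finset.mem_range.1 hj
                have : (j:ℝ) ≤ (m:ℝ) - 1 := by
                  have hj' : j + 1 ≤ m := this
                  have : ((j:ℝ) + 1) ≤ (m:ℝ) := by exact_mod_cast hj'
                  linarith
                exact this
              nlinarith [sq_nonneg (a i0)])
          calc (σsq/2)^m = ∏ _j ∈ Finset.range m, (σsq/2) := by
                rw [Finset.prod_const, Finset.card_range]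
            _ ≤ _ := h
        have hmono : esymR a tail m ≤ esymR a Finset.univ m :=
          esymR_mono a (Finset.subset_univ tail) m
        have hmom := moment_lb a Finset.univ m
        set E := ∑ x : Fin n → Bool, (Ssum a Finset.univ x)^(2*m) with hEdef
        set K := esymR a Finset.univ m with hKdef
        have hKnn : 0 ≤ K := esymR_nonneg a _ m
        have h1 : (σsq/2)^m ≤ (m.factorial : ℝ) * K := by
          calc (σsq/2)^m ≤ ∏ j ∈ Finset.range m, (σsq - (j:ℝ)*(a i0)^2) := hfac_lb
            _ ≤ (m.factorial : ℝ) * esymR a tail m := hesym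
            _ ≤ (m.factorial : ℝ) * K :=
                mul_le_mul_of_nonneg_left hmono (by positivity)
        have hs2nn : (0:ℝ) ≤ (σsq/2)^m := pow_nonneg (by linarith) m
        have hE : ((m:ℝ)*σsq/4)^m * 2^n ≤ E := by
          refine le_of_mul_le_mul_left ?_
            (show (0:ℝ) < 2^m * (m.factorial : ℝ) from by positivity)
          have epow : (2:ℝ)^m * ((m:ℝ)*σsq/4)^m = (m:ℝ)^m * (σsq/2)^m := by
            rw [← mul_pow, ← mul_pow]
            congr 1
            ring
          calc (2^m * (m.factorial : ℝ)) * (((m:ℝ)*σsq/4)^m * 2^n)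
              = ((2:ℝ)^m * ((m:ℝ)*σsq/4)^m) * ((m.factorial : ℝ) * 2^n) := by ring
            _ = ((m:ℝ)^m * (σsq/2)^m) * ((m.factorial : ℝ) * 2^n) := by rw [epow]
            _ = ((m:ℝ)^m * (m.factorial : ℝ)) * ((σsq/2)^m * 2^n) := by ring
            _ ≤ ((2*m).factorial : ℝ) * ((σsq/2)^m * 2^n) :=
                mul_le_mul_of_nonneg_right (fact_2m_ge m) (by positivity)
            _ ≤ ((2*m).factorial : ℝ) * (((m.factorial : ℝ) * K) * 2^n) := by
                refine mul_le_mul_of_nonneg_left ?_ (by positivity)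
                exact mul_le_mul_of_nonneg_right h1 (by positivity)
            _ = (m.factorial : ℝ) * (((2*m).factorial : ℝ) * K * 2^n) := by ring
            _ ≤ (m.factorial : ℝ) * (2^m * E) :=
                mul_le_mul_of_nonneg_left hmom (by positivity)
            _ = (2^m * (m.factorial : ℝ)) * E := by ring
        have hmR0 : ((2*m : ℕ):ℝ) ≠ 0 := by
          push_cast
          linarith
        have hp : (1:ℝ) ≤ t/((2*m : ℕ):ℝ) := by
          rw [le_div_iff₀ (by push_cast; linarith)]
          push_cast
          linarith
        have hpow_nonneg : ∀ x : Fin n → Bool, (0:ℝ) ≤ (Ssum a Finset.univ x)^(2*m) :=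
          fun x => Even.pow_nonneg (even_two_mul m) _
        have hJ := jensen_rpow (fun x => (Ssum a Finset.univ x)^(2*m)) hpow_nonneg hp
        have hpt : ∀ x ∈ (univ : Finset (Fin n → Bool)),
            ((Ssum a Finset.univ x)^(2*m)) ^ (t/((2*m : ℕ):ℝ)) = |Ssum a Finset.univ x| ^ t := by
          intro x _
          have habs : (Ssum a Finset.univ x)^(2*m) = |Ssum a Finset.univ x|^(2*m) := by
            rw [pow_abs, abs_of_nonneg (hpow_nonneg x)]
          rw [habs, ← Real.rpow_natCast |Ssum a Finset.univ x| (2*m),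
            ← Real.rpow_mul (abs_nonneg _)]
          congr 1
          field_simp
        rw [Finset.sum_congr rfl hpt] at hJ
        -- hJ : (E/2^n)^(t/(2m)) ≤ P/2^n
        have hEd : ((m:ℝ)*σsq/4)^m ≤ E/2^n := by
          rw [le_div_iff₀ h2npos]
          exact hE
        have hbase : (0:ℝ) ≤ (m:ℝ)*σsq/4 := by positivity
        have hEnn : (0:ℝ) ≤ ((m:ℝ)*σsq/4)^m := pow_nonneg hbase m
        have hstep : (((m:ℝ)*σsq/4)^m) ^ (t/((2*m : ℕ):ℝ)) ≤ (E/2^n) ^ (t/((2*m : ℕ):ℝ)) :=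
          Real.rpow_le_rpow hEnn hEd (by positivity)
        have hleft : (((m:ℝ)*σsq/4)^m) ^ (t/((2*m : ℕ):ℝ)) = ((m:ℝ)*σsq/4) ^ (t/2) := by
          rw [← Real.rpow_natCast ((m:ℝ)*σsq/4) m, ← Real.rpow_mul hbase]
          congr 1
          have hmne : (m:ℝ) ≠ 0 := by linarith
          push_cast
          field_simp
        have hct : c^t = (t*σsq/16) ^ (t/2) := by
          have hcsq : c^2 = t*σsq/16 := by
            rw [hcdef]
            rw [mul_pow, div_pow, Real.sq_sqrt ht0.le, Real.sq_sqrt hσsq0]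
            ring
          rw [← hcsq, ← Real.rpow_natCast c 2, ← Real.rpow_mul hc0]
          congr 1
          push_cast
          ring
        have hfin : (t*σsq/16 : ℝ) ^ (t/2) ≤ ((m:ℝ)*σsq/4) ^ (t/2) := by
          apply Real.rpow_le_rpow (by positivity) ?_ (by positivity)
          nlinarith [mul_le_mul_of_nonneg_right ht4m hσsq0]
        calc c^t = (t*σsq/16) ^ (t/2) := hct
          _ ≤ ((m:ℝ)*σsq/4) ^ (t/2) := hfin
          _ = (((m:ℝ)*σsq/4)^m) ^ (t/((2*m : ℕ):ℝ)) := hleft.symm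
          _ ≤ (E/2^n) ^ (t/((2*m : ℕ):ℝ)) := hstep
          _ ≤ P/2^n := hJ
end

section
/- Let S = Σᵢ₌₁ⁿ aᵢrᵢ and S₂ = Σ_{i≥τ+2} aᵢrᵢ where a₁ ≥ ... ≥ aₙ ≥ 0 and τ ≥ 1. Then P(|S| ≥ Σ_{i≤τ+1} aᵢ + ‖S₂‖₂) ≥ 2^{-(τ+1)}·P(|S₂| ≥ ‖S₂‖₂). -/
open Classical

/-- With `S = ∑ᵢ aᵢrᵢ` and `S₂ = ∑_{i ≥ τ+2} aᵢrᵢ` (indices 1-based, so the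
Fin-index `i` corresponds to `a_{i+1}`), decreasing nonnegative coefficients,
`P(|S| ≥ ∑_{i≤τ+1} aᵢ + ‖S₂‖₂) ≥ 2^{-(τ+1)}·P(|S₂| ≥ ‖S₂‖₂)`. -/
theorem stmt_12 (n τ : ℕ) (hτ : 1 ≤ τ) (hτn : τ + 1 ≤ n) (a : Fin n → ℝ)
    (ha : ∀ i j : Fin n, i ≤ j → a j ≤ a i) (ha0 : ∀ i, 0 ≤ a i) :
    ((2 : ℝ) ^ (τ + 1))⁻¹ *
      (((Finset.univ.filter fun x : Fin n → Bool =>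
          Real.sqrt ((∑ y : Fin n → Bool,
              (∑ i ∈ Finset.univ.filter (fun i : Fin n => τ + 2 ≤ (i : ℕ) + 1),
                a i * (if y i then (1 : ℝ) else -1)) ^ 2) / 2 ^ n)
            ≤ |∑ i ∈ Finset.univ.filter (fun i : Fin n => τ + 2 ≤ (i : ℕ) + 1),
                a i * (if x i then (1 : ℝ) else -1)|).card : ℝ) / 2 ^ n)
    ≤ ((Finset.univ.filter fun x : Fin n → Bool =>
          (∑ i ∈ Finset.univ.filter (fun i : Fin n => (i : ℕ) + 1 ≤ τ + 1), a i) +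
            Real.sqrt ((∑ y : Fin n → Bool,
              (∑ i ∈ Finset.univ.filter (fun i : Fin n => τ + 2 ≤ (i : ℕ) + 1),
                a i * (if y i then (1 : ℝ) else -1)) ^ 2) / 2 ^ n)
          ≤ |∑ i, a i * (if x i then (1 : ℝ) else -1)|).card : ℝ) / 2 ^ n := by
  set T : Finset (Fin n) := Finset.univ.filter (fun i : Fin n => τ + 2 ≤ (i : ℕ) + 1) with hT
  set H : Finset (Fin n) := Finset.univ.filter (fun i : Fin n => (i : ℕ) + 1 ≤ τ + 1) with hH
  set S2 : (Fin n → Bool) → ℝ :=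
    fun x => ∑ i ∈ T, a i * (if x i then (1 : ℝ) else -1) with hS2
  set σ : ℝ := Real.sqrt ((∑ y : Fin n → Bool, (S2 y) ^ 2) / 2 ^ n) with hσ
  set A : ℝ := ∑ i ∈ H, a i with hA
  set L : Finset (Fin n → Bool) := Finset.univ.filter (fun x => σ ≤ |S2 x|) with hL
  set R : Finset (Fin n → Bool) :=
    Finset.univ.filter (fun x => A + σ ≤ |∑ i, a i * (if x i then (1 : ℝ) else -1)|) with hR
  have hσ0 : 0 ≤ σ := Real.sqrt_nonneg _
  have hA0 : 0 ≤ A := Finset.sum_nonneg fun i _ => ha0 i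
  -- the flipping map
  set f : (Fin n → Bool) → (Fin n → Bool) :=
    fun x i => if (i : ℕ) + 1 ≤ τ + 1 then (if 0 ≤ S2 x then true else false) else x i with hf
  have hTnot : T = Finset.univ.filter (fun i : Fin n => ¬ ((i : ℕ) + 1 ≤ τ + 1)) := by
    apply Finset.filter_congr
    intro i _
    omega
  have hfT : ∀ x, S2 (f x) = S2 x := by
    intro x
    apply Finset.sum_congr rfl
    intro i hi
    rw [hT, Finset.mem_filter] at hi
    have hni : ¬ ((i : ℕ) + 1 ≤ τ + 1) := by omega
    simp only [hf]
    rw [if_neg hni]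
  have hkey : ∀ x ∈ L, f x ∈ R := by
    intro x hx
    rw [hL, Finset.mem_filter] at hx
    replace hx := hx.2
    rw [hR, Finset.mem_filter]
    refine ⟨Finset.mem_univ _, ?_⟩
    have hsplit := (Finset.sum_filter_add_sum_filter_not Finset.univ
      (fun i : Fin n => (i : ℕ) + 1 ≤ τ + 1)
      (fun i => a i * (if f x i then (1 : ℝ) else -1))).symm
    rw [← hTnot, ← hH] at hsplit
    rw [show (∑ i ∈ T, a i * (if f x i then (1 : ℝ) else -1)) = S2 x from hfT x] at hsplit
    rw [hsplit]
    by_cases h : 0 ≤ S2 x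
    · have hHsum : (∑ i ∈ H, a i * (if f x i then (1 : ℝ) else -1)) = A := by
        rw [hA]
        apply Finset.sum_congr rfl
        intro i hi
        rw [hH, Finset.mem_filter] at hi
        simp only [hf]
        rw [if_pos hi.2, if_pos h]
        simp
      rw [hHsum]
      have : σ ≤ S2 x := by rwa [abs_of_nonneg h] at hx
      calc A + σ ≤ A + S2 x := by linarith
        _ ≤ |A + S2 x| := le_abs_self _
    · have hHsum : (∑ i ∈ H, a i * (if f x i then (1 : ℝ) else -1)) = -A := by
        rw [hA, ← Finset.sum_neg_distrib]
        apply Finset.sum_congr rfl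
        intro i hi
        rw [hH, Finset.mem_filter] at hi
        simp only [hf]
        rw [if_pos hi.2, if_neg h]
        simp
      rw [hHsum]
      have hs : σ ≤ -(S2 x) := by
        rw [abs_of_neg (not_le.1 h)] at hx; exact hx
      calc A + σ ≤ A + -(S2 x) := by linarith
        _ = -(-A + S2 x) := by ring
        _ ≤ |-A + S2 x| := neg_le_abs _
  -- counting
  set e : (Fin n → Bool) → ((Fin n → Bool) × (Fin (τ + 1) → Bool)) :=
    fun x => (f x, fun j => x ⟨(j : ℕ), lt_of_lt_of_le j.2 hτn⟩) with he
  have hinj : Set.InjOn e L := by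
    intro x _ x' _ hxx'
    funext i
    by_cases hi : (i : ℕ) + 1 ≤ τ + 1
    · have h2 := congrFun (congrArg Prod.snd hxx') ⟨(i : ℕ), by omega⟩
      simpa [he] using h2
    · have h1 := congrFun (congrArg Prod.fst hxx') i
      simpa only [he, hf, if_neg hi] using h1
  have hmap : ∀ x ∈ L, e x ∈ R ×ˢ (Finset.univ : Finset (Fin (τ + 1) → Bool)) := by
    intro x hx
    rw [Finset.mem_product]
    exact ⟨hkey x hx, Finset.mem_univ _⟩
  have hcard : L.card ≤ 2 ^ (τ + 1) * R.card := by
    have h := Finset.card_le_card_of_injOn e hmap hinj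
    rw [Finset.card_product, Finset.card_univ] at h
    calc L.card ≤ R.card * Fintype.card (Fin (τ + 1) → Bool) := h
      _ = 2 ^ (τ + 1) * R.card := by
          rw [Fintype.card_fun]; simp [Nat.mul_comm]
  -- arithmetic
  have h2n : (0 : ℝ) < 2 ^ n := by positivity
  have h2τ : (0 : ℝ) < 2 ^ (τ + 1) := by positivity
  have hcardR : (L.card : ℝ) ≤ 2 ^ (τ + 1) * R.card := by exact_mod_cast hcard
  rw [inv_mul_le_iff₀ h2τ, mul_div_assoc']
  gcongr
end

section
/- Let a₁ ≥ ... ≥ aₙ ≥ 0 and τ ∈ [1, n-1] with Σ_{i≤τ} aᵢ ≤ 1 < Σ_{i≤τ+1} aᵢ. Set S₁ = Σ_{i=1}^τ aᵢrᵢ + (1 - (a₁+...+a_τ))r_{τ+1}. Then S₁ takes values in [-1,1] and ‖S - S₁‖₂ ≤ |a₁+...+a_{τ+1} - 1| + (Σ_{i≥τ+2} aᵢ²)^{1/2}, where S = Σᵢ₌₁ⁿ aᵢrᵢ. -/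
/-!
Writing `rᵢ = rademacher (x i)` and `A = a₁ + ⋯ + a_{τ+1}`, the difference is itself a
Rademacher sum, `S - S₁ = (A - 1) r_{τ+1} + ∑_{i ≥ τ+2} aᵢ rᵢ`. The `rᵢ` are orthonormal in
`L²` of the cube, so `‖S - S₁‖₂² = (A - 1)² + ∑_{i ≥ τ+2} aᵢ²`, and `√(u + v) ≤ √u + √v` gives
the bound. That `S₁` lies in `[-1, 1]` is the triangle inequality: its coefficients are
nonnegative with sum `1`.
-/

open Finset

lemma Real.sqrt_add_le_add_sqrt (x y : ℝ) : √(x + y) ≤ √x + √y := by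
  have le_sq_sqrt (z : ℝ) : z ≤ √z ^ 2 := by
    rcases le_total 0 z with hz | hz
    · rw [Real.sq_sqrt hz]
    · exact hz.trans (sq_nonneg _)
  rw [Real.sqrt_le_iff]
  refine ⟨by positivity, ?_⟩
  nlinarith [le_sq_sqrt x, le_sq_sqrt y, Real.sqrt_nonneg x, Real.sqrt_nonneg y]

def rademacher (b : Bool) : ℝ := if b then 1 else -1

@[simp] lemma rademacher_true : rademacher true = 1 := rfl

@[simp] lemma rademacher_false : rademacher false = -1 := rfl

@[simp] lemma rademacher_not (b : Bool) : rademacher (!b) = -rademacher b := by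
  cases b <;> simp

@[simp] lemma rademacher_mul_self (b : Bool) : rademacher b * rademacher b = 1 := by
  cases b <;> simp

@[simp] lemma abs_rademacher (b : Bool) : |rademacher b| = 1 := by
  cases b <;> simp

section Orthogonality

variable {ι : Type*} [Fintype ι] [DecidableEq ι]

/-- Flipping the `i`-th coordinate is an involution changing the sign of `rᵢ rⱼ`. -/
lemma sum_rademacher_mul_rademacher_of_ne {i j : ι} (hij : i ≠ j) :
    ∑ x : ι → Bool, rademacher (x i) * rademacher (x j) = 0 := by
  refine sum_involution (fun x _ => Function.update x i (!x i)) (fun x _ => ?_)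
    (fun x _ _ => ?_) (fun _ _ => mem_univ _) (fun x _ => ?_)
  · simp [Function.update_of_ne hij.symm]
  · exact fun h => by simpa using congrFun h i
  · ext k
    rcases eq_or_ne k i with rfl | hk <;> simp [Function.update_of_ne, *]

lemma sum_rademacher_mul_rademacher (i j : ι) :
    ∑ x : ι → Bool, rademacher (x i) * rademacher (x j) =
      if i = j then 2 ^ Fintype.card ι else 0 := by
  split_ifs with hij
  · simp [hij]
  · exact sum_rademacher_mul_rademacher_of_ne hij

lemma sum_sq_sum_mul_rademacher (s : Finset ι) (c : ι → ℝ) :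
    ∑ x : ι → Bool, (∑ i ∈ s, c i * rademacher (x i)) ^ 2 =
      2 ^ Fintype.card ι * ∑ i ∈ s, c i ^ 2 := by
  calc ∑ x : ι → Bool, (∑ i ∈ s, c i * rademacher (x i)) ^ 2
      = ∑ i ∈ s, ∑ j ∈ s, c i * c j *
          ∑ x : ι → Bool, rademacher (x i) * rademacher (x j) := by
        simp_rw [sq, sum_mul_sum, mul_sum, mul_mul_mul_comm]
        rw [sum_comm]
        exact sum_congr rfl fun i _ => sum_comm
    _ = 2 ^ Fintype.card ι * ∑ i ∈ s, c i ^ 2 := by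
        simp [sum_rademacher_mul_rademacher, mul_sum, sq, mul_comm]

end Orthogonality

lemma abs_sum_mul_rademacher_le {ι : Type*} (s : Finset ι) (c : ι → ℝ) (x : ι → Bool) :
    |∑ i ∈ s, c i * rademacher (x i)| ≤ ∑ i ∈ s, |c i| :=
  (abs_sum_le_sum_abs _ _).trans_eq (by simp [abs_mul])

lemma abs_sum_mul_rademacher_add_le_one {ι : Type*} {s : Finset ι} {c : ι → ℝ}
    (hc : ∀ i ∈ s, 0 ≤ c i) (hsum : ∑ i ∈ s, c i ≤ 1) (t : ι) (x : ι → Bool) :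
    |∑ i ∈ s, c i * rademacher (x i) + (1 - ∑ i ∈ s, c i) * rademacher (x t)| ≤ 1 :=
  calc |∑ i ∈ s, c i * rademacher (x i) + (1 - ∑ i ∈ s, c i) * rademacher (x t)|
      ≤ ∑ i ∈ s, |c i| + |1 - ∑ i ∈ s, c i| :=
        (abs_add_le _ _).trans (add_le_add (abs_sum_mul_rademacher_le _ _ _)
          (by rw [abs_mul, abs_rademacher, mul_one]))
    _ = 1 := by
        rw [abs_of_nonneg (sub_nonneg.2 hsum), sum_congr rfl fun i hi => abs_of_nonneg (hc i hi)]
        ring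

lemma sqrt_mean_sq_mul_rademacher_add_sum_le {ι : Type*} [Fintype ι] [DecidableEq ι]
    {s : Finset ι} {t : ι} (ht : t ∉ s) (u : ℝ) (c : ι → ℝ) :
    √((∑ x : ι → Bool, (u * rademacher (x t) + ∑ i ∈ s, c i * rademacher (x i)) ^ 2) /
        2 ^ Fintype.card ι) ≤ |u| + √(∑ i ∈ s, c i ^ 2) := by
  set c' := Function.update c t u
  have hc' : ∀ i ∈ s, c' i = c i := fun i hi =>
    Function.update_of_ne (ne_of_mem_of_not_mem hi ht) _ _
  have hsum (f : ι → ℝ → ℝ) : ∑ i ∈ insert t s, f i (c' i) = f t u + ∑ i ∈ s, f i (c i) := by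
    rw [sum_insert ht, show c' t = u from Function.update_self .., sum_congr rfl fun i hi => by
      rw [hc' i hi]]
  calc _ = √(u ^ 2 + ∑ i ∈ s, c i ^ 2) := by
        have := sum_sq_sum_mul_rademacher (insert t s) c'
        simp only [fun x : ι → Bool => hsum fun i a => a * rademacher (x i), hsum fun _ a => a ^ 2]
          at this
        rw [this, mul_div_cancel_left₀ _ (by positivity)]
    _ ≤ √(u ^ 2) + √(∑ i ∈ s, c i ^ 2) := Real.sqrt_add_le_add_sqrt _ _
    _ = |u| + √(∑ i ∈ s, c i ^ 2) := by rw [Real.sqrt_sq_eq_abs]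

lemma Fin.filter_add_one_le_add_one_eq_insert {n τ : ℕ} (h : τ < n) :
    univ.filter (fun i : Fin n => (i : ℕ) + 1 ≤ τ + 1) =
      insert ⟨τ, h⟩ (univ.filter fun i : Fin n => (i : ℕ) + 1 ≤ τ) := by
  ext i
  simp only [mem_filter, mem_univ, true_and, mem_insert, Fin.ext_iff]
  omega

lemma Fin.sum_univ_split_at {M : Type*} [AddCommMonoid M] {n τ : ℕ} (h : τ < n)
    (f : Fin n → M) :
    ∑ i, f i = ∑ i ∈ univ.filter (fun i : Fin n => (i : ℕ) + 1 ≤ τ), f i + f ⟨τ, h⟩ +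
      ∑ i ∈ univ.filter (fun i : Fin n => τ + 2 ≤ (i : ℕ) + 1), f i := by
  have hgt : univ.filter (fun i : Fin n => ¬(i : ℕ) + 1 ≤ τ + 1) =
      univ.filter (fun i : Fin n => τ + 2 ≤ (i : ℕ) + 1) :=
    filter_congr fun i _ => by omega
  rw [← sum_filter_add_sum_filter_not univ (fun i : Fin n => (i : ℕ) + 1 ≤ τ + 1),
    Fin.filter_add_one_le_add_one_eq_insert h, sum_insert (by simp), hgt, add_comm (f _)]

/-- With decreasing nonnegative coefficients, `∑_{i≤τ} aᵢ ≤ 1 < ∑_{i≤τ+1} aᵢ`,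
and `S₁ = ∑_{i=1}^τ aᵢrᵢ + (1 - (a₁+⋯+a_τ))r_{τ+1}`, the function `S₁` takes
values in `[-1,1]` and `‖S - S₁‖₂ ≤ |a₁+⋯+a_{τ+1} - 1| + (∑_{i≥τ+2} aᵢ²)^{1/2}`.
Indices are 1-based: the Fin-index `i` corresponds to `a_{i+1}`. -/
theorem stmt_13 (n τ : ℕ) (hτn : τ + 1 ≤ n) (a : Fin n → ℝ)
    (ha0 : ∀ i, 0 ≤ a i)
    (hle : ∑ i ∈ Finset.univ.filter (fun i : Fin n => (i : ℕ) + 1 ≤ τ), a i ≤ 1)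
    (S S₁ : (Fin n → Bool) → ℝ)
    (hS : ∀ x, S x = ∑ i, a i * (if x i then (1 : ℝ) else -1))
    (hS₁ : ∀ x, S₁ x =
      (∑ i ∈ Finset.univ.filter (fun i : Fin n => (i : ℕ) + 1 ≤ τ),
        a i * (if x i then (1 : ℝ) else -1)) +
      (1 - ∑ i ∈ Finset.univ.filter (fun i : Fin n => (i : ℕ) + 1 ≤ τ), a i) *
        (if x ⟨τ, by omega⟩ then (1 : ℝ) else -1)) :
    (∀ x, S₁ x ∈ Set.Icc (-1 : ℝ) 1) ∧
    Real.sqrt ((∑ x : Fin n → Bool, (S x - S₁ x) ^ 2) / 2 ^ n) ≤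
      |(∑ i ∈ Finset.univ.filter (fun i : Fin n => (i : ℕ) + 1 ≤ τ + 1), a i) - 1| +
        Real.sqrt (∑ i ∈ Finset.univ.filter (fun i : Fin n => τ + 2 ≤ (i : ℕ) + 1), a i ^ 2) := by
  -- `Fin` indices are shifted by one: `t` is the paper's index `τ + 1`.
  set t : Fin n := ⟨τ, by omega⟩
  set A := ∑ i ∈ univ.filter (fun i : Fin n => (i : ℕ) + 1 ≤ τ + 1), a i with hA_def
  have hA : A = ∑ i ∈ univ.filter (fun i : Fin n => (i : ℕ) + 1 ≤ τ), a i + a t := by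
    rw [hA_def, Fin.filter_add_one_le_add_one_eq_insert, sum_insert (by simp), add_comm]
  have hdiff (x : Fin n → Bool) : S x - S₁ x = (A - 1) * rademacher (x t) +
      ∑ i ∈ univ.filter (fun i : Fin n => τ + 2 ≤ (i : ℕ) + 1), a i * rademacher (x i) := by
    rw [hS, hS₁, Fin.sum_univ_split_at (τ := τ) (by omega), hA]
    simp only [rademacher]
    ring
  refine ⟨fun x => ?_, ?_⟩
  · rw [Set.mem_Icc, ← abs_le, hS₁]
    exact abs_sum_mul_rademacher_add_le_one (fun i _ => ha0 i) hle t x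
  · have htG : t ∉ univ.filter fun i : Fin n => τ + 2 ≤ (i : ℕ) + 1 := by simp [t]
    have := sqrt_mean_sq_mul_rademacher_add_sum_le htG (A - 1) a
    simpa only [hdiff, Fintype.card_fin] using this
end
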